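/- arXiv:quant-ph/0102115 — 10 statements merged into one kernel-verified Lean document; each statement's English description precedes it below -/
import Mathlib

section
/- Let ρ be a PPT state on ℂ²⊗ℂ²⊗ℂᴺ with rank(ρ) = N, written in 4×4 block form over the Alice–Bob index pairs (a,b) ∈ {0,1}×{0,1} with N×N blocks ρ_{(ab),(a'b')}, and assume the diagonal block ρ_{(11),(11)} has rank N. Then there exist N×N complex matrices B, C, D with [B,B†] = [C,C†] = [B,C] = [B,C†] = 0 and D Hermitian positive definite, such that ρ = (I₄⊗√D) · G · (I₄⊗√D), where G is the 4×4 block matrix whose ((a,b),(a',b')) block equals X_{ab}† X_{a'b'} with X_{00} = CB, X_{01} = C, X_{10} = B, X_{11} = I_N, √D is the positive semidefinite square root of D, and I₄⊗√D is the block-diagonal matrix with √D in each of the four diagonal blocks. -/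
open Matrix BigOperators ComplexOrder

noncomputable section

/-- Partial transpose with respect to Alice (the first `Fin 2` factor). -/
def ptA {N : ℕ} (ρ : Matrix (Fin 2 × Fin 2 × Fin N) (Fin 2 × Fin 2 × Fin N) ℂ) :
    Matrix (Fin 2 × Fin 2 × Fin N) (Fin 2 × Fin 2 × Fin N) ℂ :=
  fun x y => ρ (y.1, x.2.1, x.2.2) (x.1, y.2.1, y.2.2)

/-- Partial transpose with respect to Bob (the second `Fin 2` factor). -/
def ptB {N : ℕ} (ρ : Matrix (Fin 2 × Fin 2 × Fin N) (Fin 2 × Fin 2 × Fin N) ℂ) :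
    Matrix (Fin 2 × Fin 2 × Fin N) (Fin 2 × Fin 2 × Fin N) ℂ :=
  fun x y => ρ (x.1, y.2.1, x.2.2) (y.1, x.2.1, y.2.2)

/-- Partial transpose with respect to Alice and Bob. -/
def ptAB {N : ℕ} (ρ : Matrix (Fin 2 × Fin 2 × Fin N) (Fin 2 × Fin 2 × Fin N) ℂ) :
    Matrix (Fin 2 × Fin 2 × Fin N) (Fin 2 × Fin 2 × Fin N) ℂ :=
  ptB (ptA ρ)

/-- PPT: all partial transposes are positive semidefinite. -/
def IsPPT {N : ℕ} (ρ : Matrix (Fin 2 × Fin 2 × Fin N) (Fin 2 × Fin 2 × Fin N) ℂ) : Prop :=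
  (ptA ρ).PosSemidef ∧ (ptB ρ).PosSemidef ∧ (ptAB ρ).PosSemidef

/-- The product vector `e ⊗ f ⊗ g`. -/
def prodVec {N : ℕ} (e f : Fin 2 → ℂ) (g : Fin N → ℂ) : Fin 2 × Fin 2 × Fin N → ℂ :=
  fun x => e x.1 * f x.2.1 * g x.2.2

/-- The rank-one outer product `v v†`. -/
def outer {n : Type*} (v : n → ℂ) : Matrix n n ℂ := Matrix.vecMulVec v (star v)

/-- Full separability of a tripartite state. -/
def SeparableState {N : ℕ} (ρ : Matrix (Fin 2 × Fin 2 × Fin N) (Fin 2 × Fin 2 × Fin N) ℂ) : Prop :=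
  ∃ (k : ℕ) (p : Fin k → ℝ) (e f : Fin k → Fin 2 → ℂ) (g : Fin k → Fin N → ℂ),
    (∀ i, 0 ≤ p i) ∧
    ρ = ∑ i, (p i : ℂ) • outer (prodVec (e i) (f i) (g i))

/-- Reduced matrix of Alice. -/
def redA {N : ℕ} (ρ : Matrix (Fin 2 × Fin 2 × Fin N) (Fin 2 × Fin 2 × Fin N) ℂ) :
    Matrix (Fin 2) (Fin 2) ℂ :=
  fun a a' => ∑ b : Fin 2, ∑ c : Fin N, ρ (a, b, c) (a', b, c)

/-- Reduced matrix of Bob. -/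
def redB {N : ℕ} (ρ : Matrix (Fin 2 × Fin 2 × Fin N) (Fin 2 × Fin 2 × Fin N) ℂ) :
    Matrix (Fin 2) (Fin 2) ℂ :=
  fun b b' => ∑ a : Fin 2, ∑ c : Fin N, ρ (a, b, c) (a, b', c)

/-- Reduced matrix of Charlie. -/
def redC {N : ℕ} (ρ : Matrix (Fin 2 × Fin 2 × Fin N) (Fin 2 × Fin 2 × Fin N) ℂ) :
    Matrix (Fin N) (Fin N) ℂ :=
  fun c c' => ∑ a : Fin 2, ∑ b : Fin 2, ρ (a, b, c) (a, b, c')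

/-- `ρ` is supported on `ℂ² ⊗ ℂ² ⊗ ℂᴺ`: all single-party reduced matrices have full rank. -/
def SupportedOn {N : ℕ} (ρ : Matrix (Fin 2 × Fin 2 × Fin N) (Fin 2 × Fin 2 × Fin N) ℂ) : Prop :=
  (redA ρ).rank = 2 ∧ (redB ρ).rank = 2 ∧ (redC ρ).rank = N

/-- `X₀₀ = CB`, `X₀₁ = C`, `X₁₀ = B`, `X₁₁ = 1`. -/
def Xop {N : ℕ} (B C : Matrix (Fin N) (Fin N) ℂ) (a b : Fin 2) : Matrix (Fin N) (Fin N) ℂ :=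
  if a = 0 then (if b = 0 then C * B else C) else (if b = 0 then B else 1)

set_option linter.unusedSectionVars false

variable {n : Type*} [Fintype n] [DecidableEq n]

/-- the positive square root of a PSD matrix -/
def psqrt {F : Matrix n n ℂ} (hF : F.PosSemidef) : Matrix n n ℂ :=
  (hF.1.eigenvectorUnitary : Matrix n n ℂ) *
    diagonal (fun i => ((Real.sqrt (hF.1.eigenvalues i) : ℝ) : ℂ)) *
    (star hF.1.eigenvectorUnitary : Matrix n n ℂ)

lemma psqrt_herm {F : Matrix n n ℂ} (hF : F.PosSemidef) : (psqrt hF)ᴴ = psqrt hF := by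
  have hf : (star fun i => ((Real.sqrt (hF.1.eigenvalues i) : ℝ) : ℂ)) =
      fun i => ((Real.sqrt (hF.1.eigenvalues i) : ℝ) : ℂ) := by
    funext i; simp
  rw [psqrt, Matrix.conjTranspose_mul, Matrix.conjTranspose_mul, Matrix.diagonal_conjTranspose, hf]
  simp [Matrix.star_eq_conjTranspose, Matrix.mul_assoc]

lemma psqrt_mul_self {F : Matrix n n ℂ} (hF : F.PosSemidef) : psqrt hF * psqrt hF = F := by
  have hU : (star hF.1.eigenvectorUnitary : Matrix n n ℂ) * (hF.1.eigenvectorUnitary : Matrix n n ℂ) = 1 :=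
    Unitary.coe_star_mul_self _
  have hd : diagonal (fun i => ((Real.sqrt (hF.1.eigenvalues i) : ℝ) : ℂ)) *
      diagonal (fun i => ((Real.sqrt (hF.1.eigenvalues i) : ℝ) : ℂ))
      = diagonal (RCLike.ofReal ∘ hF.1.eigenvalues) := by
    rw [Matrix.diagonal_mul_diagonal]
    congr 1
    funext i
    simp only [Function.comp_apply]
    rw [← Complex.ofReal_mul, Real.mul_self_sqrt (hF.eigenvalues_nonneg i)]
    rfl
  conv_rhs => rw [hF.1.spectral_theorem, Unitary.conjStarAlgAut_apply]
  calc psqrt hF * psqrt hF = (hF.1.eigenvectorUnitary : Matrix n n ℂ) *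
      (diagonal (fun i => ((Real.sqrt (hF.1.eigenvalues i) : ℝ) : ℂ)) *
      ((star hF.1.eigenvectorUnitary : Matrix n n ℂ) * (hF.1.eigenvectorUnitary : Matrix n n ℂ)) *
      diagonal (fun i => ((Real.sqrt (hF.1.eigenvalues i) : ℝ) : ℂ))) *
      (star hF.1.eigenvectorUnitary : Matrix n n ℂ) := by simp only [psqrt, Matrix.mul_assoc]
    _ = _ := by rw [hU, Matrix.mul_one, hd]

lemma psd_trace_zero {F : Matrix n n ℂ} (hF : F.PosSemidef) (htr : F.trace = 0) : F = 0 := by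
  have h1 : psqrt hF * psqrt hF = F := psqrt_mul_self hF
  set S := psqrt hF with hSdef
  have hSH : Sᴴ = S := psqrt_herm hF
  have h2 : (Sᴴ * S).trace = 0 := by rw [hSH, h1, htr]
  have h3 : ∀ j i, star (S i j) * S i j = 0 := by
    have : ∑ j, ∑ i, star (S i j) * S i j = 0 := by
      simpa [Matrix.trace, Matrix.diag, Matrix.mul_apply, Matrix.conjTranspose_apply] using h2
    intro j i
    have hnn : ∀ j ∈ Finset.univ, (0:ℂ) ≤ ∑ i, star (S i j) * S i j :=
      fun j _ => Finset.sum_nonneg fun i _ => star_mul_self_nonneg _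
    have hj := (Finset.sum_eq_zero_iff_of_nonneg hnn).mp this j (Finset.mem_univ j)
    exact (Finset.sum_eq_zero_iff_of_nonneg
      (fun i _ => star_mul_self_nonneg _)).mp hj i (Finset.mem_univ i)
  have hS0 : S = 0 := by
    ext i j
    have := h3 j i
    rcases mul_eq_zero.mp this with h | h
    · simpa using star_eq_zero.mp h
    · simpa using h
  rw [← h1, hS0, Matrix.zero_mul]

lemma mulvec_all_zero {G : Matrix n n ℂ} (h : ∀ w, G *ᵥ w = 0) : G = 0 := by
  ext i j
  have := congrFun (h (Pi.single j 1)) i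
  simpa [Matrix.mulVec_single] using this

lemma offdiag_zero {G : Matrix n n ℂ}
    (h : ∀ v w, 0 ≤ star v ⬝ᵥ (G *ᵥ w) + star w ⬝ᵥ (Gᴴ *ᵥ v)) : G = 0 := by
  apply mulvec_all_zero
  intro w
  have h1 := h (-(G *ᵥ w)) w
  have e1 : star (-(G *ᵥ w)) ⬝ᵥ (G *ᵥ w) = -(star (G *ᵥ w) ⬝ᵥ (G *ᵥ w)) := by
    simp
  have e2 : star w ⬝ᵥ (Gᴴ *ᵥ (-(G *ᵥ w))) = -(star (G *ᵥ w) ⬝ᵥ (G *ᵥ w)) := by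
    rw [Matrix.mulVec_neg, dotProduct_neg, Matrix.dotProduct_mulVec, ← Matrix.star_mulVec]
  rw [e1, e2] at h1
  have hx0 : (0:ℂ) ≤ star (G *ᵥ w) ⬝ᵥ (G *ᵥ w) := dotProduct_star_self_nonneg _
  have hxx : star (G *ᵥ w) ⬝ᵥ (G *ᵥ w) + star (G *ᵥ w) ⬝ᵥ (G *ᵥ w) ≤ 0 := by
    rw [← neg_add] at h1; exact neg_nonneg.mp h1
  have h3 : star (G *ᵥ w) ⬝ᵥ (G *ᵥ w) = 0 :=
    le_antisymm (le_trans (le_add_of_nonneg_left hx0) hxx) hx0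
  exact dotProduct_star_self_eq_zero.mp h3


lemma dp_adj (P : Matrix n n ℂ) (v u : n → ℂ) :
    star (P *ᵥ v) ⬝ᵥ u = star v ⬝ᵥ (Pᴴ *ᵥ u) := by
  rw [Matrix.star_mulVec, ← Matrix.dotProduct_mulVec]

lemma schur2 {A P : Matrix n n ℂ}
    (h : ∀ v t, 0 ≤ star v ⬝ᵥ (A *ᵥ v) + star v ⬝ᵥ (Pᴴ *ᵥ t)
      + star t ⬝ᵥ (P *ᵥ v) + star t ⬝ᵥ t) :
    ∀ v, 0 ≤ star v ⬝ᵥ ((A - Pᴴ * P) *ᵥ v) := by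
  intro v
  have h1 := h v (-(P *ᵥ v))
  have e : star v ⬝ᵥ (A *ᵥ v) + star v ⬝ᵥ (Pᴴ *ᵥ (-(P *ᵥ v)))
      + star (-(P *ᵥ v)) ⬝ᵥ (P *ᵥ v) + star (-(P *ᵥ v)) ⬝ᵥ (-(P *ᵥ v))
      = star v ⬝ᵥ ((A - Pᴴ * P) *ᵥ v) := by
    simp only [Matrix.mulVec_neg, dotProduct_neg, star_neg, neg_dotProduct,
      dp_adj, Matrix.mulVec_mulVec, Matrix.sub_mulVec, dotProduct_sub, neg_neg]
    ring
  rw [e] at h1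
  exact h1

lemma schur3 {A₁ A₂ F P Q : Matrix n n ℂ}
    (hA₁ : A₁ = Pᴴ * P) (hA₂ : A₂ = Qᴴ * Q)
    (h : ∀ v w t, 0 ≤ star v ⬝ᵥ (A₁ *ᵥ v) + star v ⬝ᵥ (F *ᵥ w) + star v ⬝ᵥ (Pᴴ *ᵥ t)
      + star w ⬝ᵥ (Fᴴ *ᵥ v) + star w ⬝ᵥ (A₂ *ᵥ w) + star w ⬝ᵥ (Qᴴ *ᵥ t)
      + star t ⬝ᵥ (P *ᵥ v) + star t ⬝ᵥ (Q *ᵥ w) + star t ⬝ᵥ t) :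
    F = Pᴴ * Q := by
  have hG : F - Pᴴ * Q = 0 := by
    apply offdiag_zero
    intro v w
    have h1 := h v w (-(P *ᵥ v + Q *ᵥ w))
    subst hA₁ hA₂
    have e : star v ⬝ᵥ ((Pᴴ * P) *ᵥ v) + star v ⬝ᵥ (F *ᵥ w)
        + star v ⬝ᵥ (Pᴴ *ᵥ (-(P *ᵥ v + Q *ᵥ w)))
        + star w ⬝ᵥ (Fᴴ *ᵥ v) + star w ⬝ᵥ ((Qᴴ * Q) *ᵥ w)
        + star w ⬝ᵥ (Qᴴ *ᵥ (-(P *ᵥ v + Q *ᵥ w)))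
        + star (-(P *ᵥ v + Q *ᵥ w)) ⬝ᵥ (P *ᵥ v)
        + star (-(P *ᵥ v + Q *ᵥ w)) ⬝ᵥ (Q *ᵥ w)
        + star (-(P *ᵥ v + Q *ᵥ w)) ⬝ᵥ (-(P *ᵥ v + Q *ᵥ w))
        = star v ⬝ᵥ ((F - Pᴴ * Q) *ᵥ w) + star w ⬝ᵥ ((F - Pᴴ * Q)ᴴ *ᵥ v) := by
      simp only [Matrix.mulVec_neg, Matrix.mulVec_add, dotProduct_neg,
        dotProduct_add, star_neg, star_add, neg_dotProduct,
        add_dotProduct, dp_adj, Matrix.mulVec_mulVec, Matrix.sub_mulVec,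
        dotProduct_sub, Matrix.conjTranspose_sub, Matrix.conjTranspose_mul,
        Matrix.conjTranspose_conjTranspose, neg_neg]
      ring
    rw [e] at h1
    exact h1
  rw [sub_eq_zero] at hG
  exact hG

lemma sum_reorder {α : Type*} [AddCommMonoid α] {N : ℕ}
    (f : Fin 2 → Fin 2 → Fin N → Fin 2 → Fin 2 → Fin N → α) :
    ∑ a, ∑ b, ∑ c, ∑ a', ∑ b', ∑ c', f a b c a' b' c'
      = ∑ a, ∑ b, ∑ a', ∑ b', ∑ c, ∑ c', f a b c a' b' c' := by
  refine Finset.sum_congr rfl fun a _ => Finset.sum_congr rfl fun b _ => ?_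
  rw [Finset.sum_comm]
  exact Finset.sum_congr rfl fun a' _ => Finset.sum_comm

lemma quad_expand {N : ℕ}
    (τ : Matrix (Fin 2 × Fin 2 × Fin N) (Fin 2 × Fin 2 × Fin N) ℂ)
    (hτ : τ.PosSemidef) (g : Fin 2 → Fin 2 → Fin N → ℂ) :
    0 ≤ ∑ a : Fin 2, ∑ b : Fin 2, ∑ a' : Fin 2, ∑ b' : Fin 2,
      star (g a b) ⬝ᵥ ((Matrix.of fun c c' => τ (a,b,c) (a',b',c')) *ᵥ g a' b') := by
  have h := hτ.dotProduct_mulVec_nonneg (fun x => g x.1 x.2.1 x.2.2)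
  have e : star (fun x : Fin 2 × Fin 2 × Fin N => g x.1 x.2.1 x.2.2) ⬝ᵥ
      (τ *ᵥ fun x => g x.1 x.2.1 x.2.2)
      = ∑ a : Fin 2, ∑ b : Fin 2, ∑ a' : Fin 2, ∑ b' : Fin 2,
        star (g a b) ⬝ᵥ ((Matrix.of fun c c' => τ (a,b,c) (a',b',c')) *ᵥ g a' b') := by
    simp only [dotProduct, Matrix.mulVec, Matrix.of_apply, Pi.star_apply,
      Fintype.sum_prod_type, Finset.mul_sum]
    exact sum_reorder _
  rw [e] at h
  exact h

lemma sandwich {R : Matrix n n ℂ} (hR : Rᴴ = R) (hR1 : R⁻¹ * R = 1) (hR2 : R * R⁻¹ = 1)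
    (M : Matrix n n ℂ) (u u' : n → ℂ) :
    star (R⁻¹ *ᵥ u) ⬝ᵥ ((R * M * R) *ᵥ (R⁻¹ *ᵥ u')) = star u ⬝ᵥ (M *ᵥ u') := by
  have hRinvH : (R⁻¹)ᴴ = R⁻¹ := by rw [Matrix.conjTranspose_nonsing_inv, hR]
  have key : R⁻¹ * (R * M * R) * R⁻¹ = M := by
    calc R⁻¹ * (R * M * R) * R⁻¹ = R⁻¹ * R * (M * (R * R⁻¹)) := by
          simp only [Matrix.mul_assoc]
      _ = M := by rw [hR1, hR2, Matrix.mul_one, Matrix.one_mul]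
  rw [dp_adj, hRinvH, Matrix.mulVec_mulVec, Matrix.mulVec_mulVec, key]

/-- helper to define test vectors indexed by two bits -/
def g4 {N : ℕ} (u00 u01 u10 u11 : Fin N → ℂ) (a b : Fin 2) : Fin N → ℂ :=
  if a = 0 then (if b = 0 then u00 else u01) else (if b = 0 then u10 else u11)

@[simp] lemma g4_00 {N : ℕ} (u00 u01 u10 u11 : Fin N → ℂ) : g4 u00 u01 u10 u11 0 0 = u00 := rfl
@[simp] lemma g4_01 {N : ℕ} (u00 u01 u10 u11 : Fin N → ℂ) : g4 u00 u01 u10 u11 0 1 = u01 := rfl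
@[simp] lemma g4_10 {N : ℕ} (u00 u01 u10 u11 : Fin N → ℂ) : g4 u00 u01 u10 u11 1 0 = u10 := rfl
@[simp] lemma g4_11 {N : ℕ} (u00 u01 u10 u11 : Fin N → ℂ) : g4 u00 u01 u10 u11 1 1 = u11 := rfl

/-- embedding matrix of the `(a,b)` column block -/
def emb {N : ℕ} (a b : Fin 2) : Matrix (Fin 2 × Fin 2 × Fin N) (Fin N) ℂ :=
  Matrix.of fun p c => if p = (a, b, c) then 1 else 0

lemma emb_mul_left {N : ℕ} {m : Type*} [Fintype m] (M : Matrix m (Fin 2 × Fin 2 × Fin N) ℂ)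
    (a b : Fin 2) (x : m) (c : Fin N) : (M * emb (N := N) a b) x c = M x (a, b, c) := by
  simp only [Matrix.mul_apply, emb, Matrix.of_apply, mul_ite, mul_one, mul_zero]
  rw [Finset.sum_ite_eq' Finset.univ (a, b, c) (fun p => M x p)]
  simp

lemma emb_mul_right {N : ℕ} {m : Type*} (M : Matrix (Fin 2 × Fin 2 × Fin N) m ℂ)
    (a b : Fin 2) (c : Fin N) (x : m) : ((emb (N := N) a b)ᴴ * M) c x = M (a, b, c) x := by
  simp only [Matrix.mul_apply, emb, Matrix.conjTranspose_apply, Matrix.of_apply,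
    apply_ite (star : ℂ → ℂ), star_one, star_zero, ite_mul, one_mul, zero_mul]
  rw [Finset.sum_ite_eq' Finset.univ (a, b, c) (fun p => M p x)]
  simp

lemma block_eq {N : ℕ} (τ : Matrix (Fin 2 × Fin 2 × Fin N) (Fin 2 × Fin 2 × Fin N) ℂ)
    (a b a' b' : Fin 2) :
    (Matrix.of fun c c' => τ (a, b, c) (a', b', c')) = (emb (N := N) a b)ᴴ * τ * emb (N := N) a' b' := by
  ext c c'
  rw [Matrix.of_apply, emb_mul_left, emb_mul_right]

lemma psd_full_rank_posDef {F : Matrix n n ℂ} (hF : F.PosSemidef)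
    (hr : F.rank = Fintype.card n) : F.PosDef := by
  refine PosDef.of_dotProduct_mulVec_pos hF.1 (fun x hx => ?_)
  have hnn := hF.dotProduct_mulVec_nonneg x
  rcases lt_or_eq_of_le hnn with h | h
  · exact h
  · exfalso
    apply hx
    -- quadratic form zero forces F *ᵥ x = 0
    have hq : star x ⬝ᵥ (F *ᵥ x) = star (psqrt hF *ᵥ x) ⬝ᵥ (psqrt hF *ᵥ x) := by
      rw [dp_adj, Matrix.mulVec_mulVec, psqrt_herm hF, psqrt_mul_self hF]
    have hSx : psqrt hF *ᵥ x = 0 := by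
      rw [← dotProduct_star_self_eq_zero, ← hq, ← h]
    have hFx : F *ᵥ x = 0 := by
      rw [← psqrt_mul_self hF, ← Matrix.mulVec_mulVec, hSx, Matrix.mulVec_zero]
    -- kernel is trivial since rank is full
    have hker : LinearMap.ker F.mulVecLin = ⊥ := by
      have h1 := LinearMap.finrank_range_add_finrank_ker F.mulVecLin
      rw [Module.finrank_fintype_fun_eq_card] at h1
      have h2 : Module.finrank ℂ (LinearMap.range F.mulVecLin) = Fintype.card n := hr
      rw [h2] at h1
      have h3 : Module.finrank ℂ (LinearMap.ker F.mulVecLin) = 0 := by omega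
      exact Submodule.finrank_eq_zero.mp h3
    have : x ∈ LinearMap.ker F.mulVecLin := by
      simp [LinearMap.mem_ker, Matrix.mulVecLin_apply, hFx]
    rw [hker] at this
    simpa using this

lemma representation {N : ℕ} (ρ : Matrix (Fin 2 × Fin 2 × Fin N) (Fin 2 × Fin 2 × Fin N) ℂ)
    (hpos : ρ.PosSemidef) (hrank : ρ.rank = N)
    (hDrank : ((emb (N := N) 1 1)ᴴ * ρ * emb (N := N) 1 1).rank = N) :
    ρ = ((emb (N := N) 1 1)ᴴ * ρ)ᴴ * ((emb (N := N) 1 1)ᴴ * ρ * emb (N := N) 1 1)⁻¹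
      * ((emb (N := N) 1 1)ᴴ * ρ) := by
  set Dmat := (emb (N := N) 1 1)ᴴ * ρ * emb (N := N) 1 1 with hDdef
  have hDpsd : Dmat.PosSemidef := by
    have := hpos.mul_mul_conjTranspose_same (emb (N := N) 1 1)ᴴ
    simpa [Matrix.conjTranspose_conjTranspose] using this
  have hDpd : Dmat.PosDef := psd_full_rank_posDef hDpsd (by simpa using hDrank)
  have hDdet : IsUnit Dmat.det := (Matrix.isUnit_iff_isUnit_det _).mp hDpd.isUnit
  set A := psqrt hpos with hAdef
  have hAH : Aᴴ = A := psqrt_herm hpos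
  have hAA : A * A = ρ := psqrt_mul_self hpos
  set K := A * emb (N := N) 1 1 with hKdef
  have hKK : Kᴴ * K = Dmat := by
    rw [hKdef, Matrix.conjTranspose_mul, hDdef, Matrix.mul_assoc, Matrix.mul_assoc, hAH,
      ← Matrix.mul_assoc A A, hAA]
  have hrankA : A.rank = N := by
    have := Matrix.rank_conjTranspose_mul_self A
    rw [hAH, hAA, hrank] at this
    exact this.symm
  have hrankK : K.rank = N := by
    have := Matrix.rank_conjTranspose_mul_self K
    rw [hKK, hDrank] at this
    exact this.symm
  have hle : LinearMap.range K.mulVecLin ≤ LinearMap.range A.mulVecLin := by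
    rintro y ⟨u, rfl⟩
    exact ⟨emb (N := N) 1 1 *ᵥ u, by rw [Matrix.mulVecLin_apply, Matrix.mulVecLin_apply,
      Matrix.mulVec_mulVec]⟩
  have hrange : LinearMap.range K.mulVecLin = LinearMap.range A.mulVecLin := by
    apply Submodule.eq_of_le_of_finrank_eq hle
    show K.rank = A.rank
    rw [hrankA, hrankK]
  have hcol : ∀ j, ∃ u, K *ᵥ u = fun i => A i j := by
    intro j
    have : (A *ᵥ Pi.single j 1) ∈ LinearMap.range A.mulVecLin := ⟨Pi.single j 1, rfl⟩
    rw [← hrange] at this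
    obtain ⟨u, hu⟩ := this
    refine ⟨u, ?_⟩
    rw [Matrix.mulVecLin_apply] at hu
    rw [hu]
    funext i
    simp [Matrix.mulVec_single]
  set M : Matrix (Fin N) (Fin 2 × Fin 2 × Fin N) ℂ :=
    Matrix.of fun k j => Classical.choose (hcol j) k with hMdef
  have hKM : K * M = A := by
    ext i j
    have := congrFun (Classical.choose_spec (hcol j)) i
    rw [Matrix.mul_apply]
    exact this
  have hProw : (emb (N := N) 1 1)ᴴ * ρ = Dmat * M := by
    calc (emb (N := N) 1 1)ᴴ * ρ = (emb (N := N) 1 1)ᴴ * (A * A) := by rw [hAA]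
      _ = ((emb (N := N) 1 1)ᴴ * Aᴴ) * A := by rw [hAH, Matrix.mul_assoc]
      _ = Kᴴ * A := by rw [hKdef, Matrix.conjTranspose_mul]
      _ = Kᴴ * (K * M) := by rw [hKM]
      _ = (Kᴴ * K) * M := (Matrix.mul_assoc Kᴴ K M).symm
      _ = Dmat * M := by rw [hKK]
  have hfin : Mᴴ * (Dmat * M) = ρ := by
    calc Mᴴ * (Dmat * M) = Mᴴ * (Kᴴ * (K * M)) := by rw [← hKK, Matrix.mul_assoc]
      _ = Mᴴ * (Kᴴ * A) := by rw [hKM]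
      _ = (K * M)ᴴ * A := by rw [Matrix.conjTranspose_mul K M, Matrix.mul_assoc Mᴴ Kᴴ A]
      _ = Aᴴ * A := by rw [hKM]
      _ = ρ := by rw [hAH, hAA]
  rw [hProw, Matrix.conjTranspose_mul, hDpsd.1.eq, Matrix.mul_assoc Mᴴ Dmat Dmat⁻¹,
    Matrix.mul_nonsing_inv _ hDdet, Matrix.mul_one]
  exact hfin.symm

lemma triple_conj {R P : Matrix n n ℂ} (hR : Rᴴ = R) : (R * P * R)ᴴ = R * Pᴴ * R := by
  simp only [Matrix.conjTranspose_mul, hR, Matrix.mul_assoc]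

lemma sandwich_matrix (R P P' : Matrix n n ℂ) (hR1 : R⁻¹ * R = 1) (hR2 : R * R⁻¹ = 1) :
    R * ((R⁻¹ * P * R⁻¹) * (R⁻¹ * P' * R⁻¹)) * R = P * (R⁻¹ * R⁻¹) * P' := by
  calc R * ((R⁻¹ * P * R⁻¹) * (R⁻¹ * P' * R⁻¹)) * R
      = (R * R⁻¹) * P * (R⁻¹ * R⁻¹) * P' * (R⁻¹ * R) := by
        simp only [Matrix.mul_assoc]
    _ = P * (R⁻¹ * R⁻¹) * P' := by rw [hR1, hR2, Matrix.one_mul, Matrix.mul_one]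

/-- Canonical form of a rank-`N` PPT state whose `(11),(11)` block has rank `N`. -/
theorem canonical_form (N : ℕ)
    (ρ : Matrix (Fin 2 × Fin 2 × Fin N) (Fin 2 × Fin 2 × Fin N) ℂ)
    (hpos : ρ.PosSemidef) (hppt : IsPPT ρ) (hrank : ρ.rank = N)
    (hblock : (Matrix.of fun c c' : Fin N => ρ (1, 1, c) (1, 1, c')).rank = N) :
    ∃ (B C D : Matrix (Fin N) (Fin N) ℂ) (hD : D.PosDef),
      B * Bᴴ = Bᴴ * B ∧ C * Cᴴ = Cᴴ * C ∧ B * C = C * B ∧ B * Cᴴ = Cᴴ * B ∧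
      ∀ a b a' b' c c', ρ (a, b, c) (a', b', c') =
        (((hD.isHermitian.eigenvectorUnitary : Matrix (Fin N) (Fin N) ℂ) * diagonal (fun i => ((Real.sqrt (hD.isHermitian.eigenvalues i) : ℝ) : ℂ)) * (star hD.isHermitian.eigenvectorUnitary : Matrix (Fin N) (Fin N) ℂ)) * (Xop B C a b)ᴴ * Xop B C a' b' * ((hD.isHermitian.eigenvectorUnitary : Matrix (Fin N) (Fin N) ℂ) * diagonal (fun i => ((Real.sqrt (hD.isHermitian.eigenvalues i) : ℝ) : ℂ)) * (star hD.isHermitian.eigenvectorUnitary : Matrix (Fin N) (Fin N) ℂ))) c c' := by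
  obtain ⟨hPTA, hPTB, hPTAB⟩ := hppt
  have hDrank : ((emb (N := N) 1 1)ᴴ * ρ * emb (N := N) 1 1).rank = N := by
    rw [← block_eq ρ 1 1 1 1]; exact hblock
  obtain ⟨Pr, hPr⟩ : ∃ Pr, Pr = (emb (N := N) 1 1)ᴴ * ρ := ⟨_, rfl⟩
  obtain ⟨Pm, hPm⟩ : ∃ Pm, Pm = fun a b : Fin 2 => Pr * emb (N := N) a b := ⟨_, rfl⟩
  have hPm' : ∀ a b : Fin 2, Pm a b = (emb (N := N) 1 1)ᴴ * ρ * emb (N := N) a b := by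
    intro a b; rw [hPm, hPr]
  have hDm : Pm 1 1 = (emb (N := N) 1 1)ᴴ * ρ * emb (N := N) 1 1 := hPm' 1 1
  have hDrank' : (Pm 1 1).rank = N := by rw [hDm]; exact hDrank
  have hDpsd : (Pm 1 1).PosSemidef := by
    rw [hDm]; exact hpos.conjTranspose_mul_mul_same (emb (N := N) 1 1)
  have hDpd : (Pm 1 1).PosDef := psd_full_rank_posDef hDpsd (by simpa using hDrank')
  have hDdet : IsUnit (Pm 1 1).det := (Matrix.isUnit_iff_isUnit_det _).mp hDpd.isUnit
  obtain ⟨R, hRdef⟩ : ∃ R, R = psqrt hDpd.posSemidef := ⟨_, rfl⟩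
  have hRH : Rᴴ = R := by rw [hRdef]; exact psqrt_herm hDpd.posSemidef
  have hRR : R * R = Pm 1 1 := by rw [hRdef]; exact psqrt_mul_self hDpd.posSemidef
  have hdetR : IsUnit R.det := by
    have h1 : R.det * R.det = (Pm 1 1).det := by rw [← Matrix.det_mul, hRR]
    have h2 : IsUnit (R.det * R.det) := h1 ▸ hDdet
    exact (IsUnit.mul_iff.mp h2).1
  have hR1 : R⁻¹ * R = 1 := Matrix.nonsing_inv_mul _ hdetR
  have hR2 : R * R⁻¹ = 1 := Matrix.mul_nonsing_inv _ hdetR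
  have hRiH : (R⁻¹)ᴴ = R⁻¹ := by rw [Matrix.conjTranspose_nonsing_inv, hRH]
  have hDinv : (Pm 1 1)⁻¹ = R⁻¹ * R⁻¹ := by rw [← hRR, Matrix.mul_inv_rev]
  obtain ⟨X, hXdef⟩ : ∃ X, X = fun a b : Fin 2 => R⁻¹ * Pm a b * R⁻¹ := ⟨_, rfl⟩
  have hXeq : ∀ a b : Fin 2, X a b = R⁻¹ * Pm a b * R⁻¹ := fun a b => by rw [hXdef]
  -- the block representation
  have hrep0 : ρ = Prᴴ * (Pm 1 1)⁻¹ * Pr := by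
    rw [hPm, hPr]
    exact representation ρ hpos hrank hDrank
  have hrep : ∀ a b a' b' : Fin 2,
      (emb (N := N) a b)ᴴ * ρ * emb (N := N) a' b' = R * ((X a b)ᴴ * X a' b') * R := by
    intro a b a' b'
    have hXH : (X a b)ᴴ = R⁻¹ * (Pm a b)ᴴ * R⁻¹ := by
      rw [hXeq]
      calc (R⁻¹ * Pm a b * R⁻¹)ᴴ = (R⁻¹)ᴴ * ((Pm a b)ᴴ * (R⁻¹)ᴴ) := by
            rw [Matrix.conjTranspose_mul, Matrix.conjTranspose_mul]
        _ = R⁻¹ * (Pm a b)ᴴ * R⁻¹ := by rw [hRiH, Matrix.mul_assoc]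
    rw [hXH, hXeq, sandwich_matrix R ((Pm a b)ᴴ) (Pm a' b') hR1 hR2, ← hDinv]
    conv_lhs => rw [hrep0]
    calc (emb (N := N) a b)ᴴ * (Prᴴ * (Pm 1 1)⁻¹ * Pr) * emb (N := N) a' b'
        = ((emb (N := N) a b)ᴴ * Prᴴ) * (Pm 1 1)⁻¹ * (Pr * emb (N := N) a' b') := by
          simp only [Matrix.mul_assoc]
      _ = (Pr * emb (N := N) a b)ᴴ * (Pm 1 1)⁻¹ * (Pr * emb (N := N) a' b') := by
          rw [Matrix.conjTranspose_mul Pr (emb (N := N) a b)]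
      _ = (Pm a b)ᴴ * (Pm 1 1)⁻¹ * Pm a' b' := by rw [hPm]
  -- block formulas for the partial transposes
  have hblkA : ∀ a b a' b' : Fin 2,
      (Matrix.of fun c c' : Fin N => (ptA ρ) (a,b,c) (a',b',c'))
        = R * ((X a' b)ᴴ * X a b') * R := by
    intro a b a' b'
    have h1 : (Matrix.of fun c c' : Fin N => (ptA ρ) (a,b,c) (a',b',c'))
        = Matrix.of fun c c' : Fin N => ρ (a',b,c) (a,b',c') := rfl
    rw [h1, block_eq, hrep]
  have hblkB : ∀ a b a' b' : Fin 2,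
      (Matrix.of fun c c' : Fin N => (ptB ρ) (a,b,c) (a',b',c'))
        = R * ((X a b')ᴴ * X a' b) * R := by
    intro a b a' b'
    have h1 : (Matrix.of fun c c' : Fin N => (ptB ρ) (a,b,c) (a',b',c'))
        = Matrix.of fun c c' : Fin N => ρ (a,b',c) (a',b,c') := rfl
    rw [h1, block_eq, hrep]
  have hblkAB : ∀ a b a' b' : Fin 2,
      (Matrix.of fun c c' : Fin N => (ptAB ρ) (a,b,c) (a',b',c'))
        = R * ((X a' b')ᴴ * X a b) * R := by
    intro a b a' b'
    have h1 : (Matrix.of fun c c' : Fin N => (ptAB ρ) (a,b,c) (a',b',c'))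
        = Matrix.of fun c c' : Fin N => ρ (a',b',c) (a,b,c') := rfl
    rw [h1, block_eq, hrep]
  have hX11 : X 1 1 = 1 := by
    rw [hXeq, ← hRR]
    calc R⁻¹ * (R * R) * R⁻¹ = (R⁻¹ * R) * (R * R⁻¹) := by simp only [Matrix.mul_assoc]
      _ = 1 := by rw [hR1, hR2, Matrix.one_mul]
  -- C is normal
  have hCq : ∀ v, 0 ≤ star v ⬝ᵥ (((X 0 1)ᴴ * X 0 1 - ((X 0 1)ᴴ)ᴴ * (X 0 1)ᴴ) *ᵥ v) := by
    apply schur2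
    intro v t
    have H := quad_expand (ptA ρ) hPTA (g4 0 (R⁻¹ *ᵥ v) 0 (R⁻¹ *ᵥ t))
    simp only [hblkA, Fin.sum_univ_two, g4_00, g4_01, g4_10, g4_11, star_zero,
      zero_dotProduct, Matrix.mulVec_zero, dotProduct_zero, add_zero, zero_add,
      sandwich hRH hR1 hR2] at H
    simp only [hX11, Matrix.conjTranspose_one, Matrix.one_mul, Matrix.mul_one,
      Matrix.one_mulVec] at H
    simp only [Matrix.conjTranspose_conjTranspose]
    convert H using 1
    ring
  have hCn : (X 0 1)ᴴ * X 0 1 = X 0 1 * (X 0 1)ᴴ := by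
    have hq2 : ∀ v, 0 ≤ star v ⬝ᵥ (((X 0 1)ᴴ * X 0 1 - X 0 1 * (X 0 1)ᴴ) *ᵥ v) := by
      simpa using hCq
    have hherm : ((X 0 1)ᴴ * X 0 1 - X 0 1 * (X 0 1)ᴴ).IsHermitian := by
      simp [Matrix.IsHermitian, Matrix.conjTranspose_sub, Matrix.conjTranspose_mul]
    have htr : ((X 0 1)ᴴ * X 0 1 - X 0 1 * (X 0 1)ᴴ).trace = 0 := by
      rw [Matrix.trace_sub, Matrix.trace_mul_comm, sub_self]
    have := psd_trace_zero (PosSemidef.of_dotProduct_mulVec_nonneg hherm hq2) htr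
    rwa [sub_eq_zero] at this
  -- B is normal
  have hBq : ∀ v, 0 ≤ star v ⬝ᵥ (((X 1 0)ᴴ * X 1 0 - ((X 1 0)ᴴ)ᴴ * (X 1 0)ᴴ) *ᵥ v) := by
    apply schur2
    intro v t
    have H := quad_expand (ptB ρ) hPTB (g4 0 0 (R⁻¹ *ᵥ v) (R⁻¹ *ᵥ t))
    simp only [hblkB, Fin.sum_univ_two, g4_00, g4_01, g4_10, g4_11, star_zero,
      zero_dotProduct, Matrix.mulVec_zero, dotProduct_zero, add_zero, zero_add,
      sandwich hRH hR1 hR2] at H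
    simp only [hX11, Matrix.conjTranspose_one, Matrix.one_mul, Matrix.mul_one,
      Matrix.one_mulVec] at H
    simp only [Matrix.conjTranspose_conjTranspose]
    convert H using 1
    ring
  have hBn : (X 1 0)ᴴ * X 1 0 = X 1 0 * (X 1 0)ᴴ := by
    have hq2 : ∀ v, 0 ≤ star v ⬝ᵥ (((X 1 0)ᴴ * X 1 0 - X 1 0 * (X 1 0)ᴴ) *ᵥ v) := by
      simpa using hBq
    have hherm : ((X 1 0)ᴴ * X 1 0 - X 1 0 * (X 1 0)ᴴ).IsHermitian := by
      simp [Matrix.IsHermitian, Matrix.conjTranspose_sub, Matrix.conjTranspose_mul]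
    have htr : ((X 1 0)ᴴ * X 1 0 - X 1 0 * (X 1 0)ᴴ).trace = 0 := by
      rw [Matrix.trace_sub, Matrix.trace_mul_comm, sub_self]
    have := psd_trace_zero (PosSemidef.of_dotProduct_mulVec_nonneg hherm hq2) htr
    rwa [sub_eq_zero] at this
  -- E = C * B from ptA
  have hE1 : X 0 0 = X 0 1 * X 1 0 := by
    have h := schur3 (A₁ := (X 0 1)ᴴ * X 0 1) (A₂ := (X 1 0)ᴴ * X 1 0)
      (F := X 0 0) (P := (X 0 1)ᴴ) (Q := X 1 0)
      (by rw [Matrix.conjTranspose_conjTranspose]; exact hCn) rfl ?_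
    · rw [h, Matrix.conjTranspose_conjTranspose]
    intro v w t
    have H := quad_expand (ptA ρ) hPTA (g4 0 (R⁻¹ *ᵥ v) (R⁻¹ *ᵥ w) (R⁻¹ *ᵥ t))
    simp only [hblkA, Fin.sum_univ_two, g4_00, g4_01, g4_10, g4_11, star_zero,
      zero_dotProduct, Matrix.mulVec_zero, dotProduct_zero, add_zero, zero_add,
      sandwich hRH hR1 hR2] at H
    simp only [hX11, Matrix.conjTranspose_one, Matrix.one_mul, Matrix.mul_one,
      Matrix.one_mulVec] at H
    simp only [Matrix.conjTranspose_conjTranspose]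
    convert H using 1
    ring
  -- E = B * C from ptB
  have hE2 : X 0 0 = X 1 0 * X 0 1 := by
    have h := schur3 (A₁ := (X 0 1)ᴴ * X 0 1) (A₂ := (X 1 0)ᴴ * X 1 0)
      (F := (X 0 0)ᴴ) (P := X 0 1) (Q := (X 1 0)ᴴ)
      rfl (by rw [Matrix.conjTranspose_conjTranspose]; exact hBn) ?_
    · have := congrArg Matrix.conjTranspose h
      simpa [Matrix.conjTranspose_mul] using this
    intro v w t
    have H := quad_expand (ptB ρ) hPTB (g4 0 (R⁻¹ *ᵥ v) (R⁻¹ *ᵥ w) (R⁻¹ *ᵥ t))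
    simp only [hblkB, Fin.sum_univ_two, g4_00, g4_01, g4_10, g4_11, star_zero,
      zero_dotProduct, Matrix.mulVec_zero, dotProduct_zero, add_zero, zero_add,
      sandwich hRH hR1 hR2] at H
    simp only [hX11, Matrix.conjTranspose_one, Matrix.one_mul, Matrix.mul_one,
      Matrix.one_mulVec] at H
    simp only [Matrix.conjTranspose_conjTranspose]
    convert H using 1
    ring
  -- Bᴴ C = C Bᴴ from ptAB
  have hE3 : (X 1 0)ᴴ * X 0 1 = X 0 1 * (X 1 0)ᴴ := by
    have h := schur3 (A₁ := (X 0 1)ᴴ * X 0 1) (A₂ := (X 1 0)ᴴ * X 1 0)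
      (F := (X 1 0)ᴴ * X 0 1) (P := (X 0 1)ᴴ) (Q := (X 1 0)ᴴ)
      (by rw [Matrix.conjTranspose_conjTranspose]; exact hCn)
      (by rw [Matrix.conjTranspose_conjTranspose]; exact hBn) ?_
    · rwa [Matrix.conjTranspose_conjTranspose] at h
    intro v w t
    have H := quad_expand (ptAB ρ) hPTAB (g4 0 (R⁻¹ *ᵥ v) (R⁻¹ *ᵥ w) (R⁻¹ *ᵥ t))
    simp only [hblkAB, Fin.sum_univ_two, g4_00, g4_01, g4_10, g4_11, star_zero,
      zero_dotProduct, Matrix.mulVec_zero, dotProduct_zero, add_zero, zero_add,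
      sandwich hRH hR1 hR2] at H
    simp only [hX11, Matrix.conjTranspose_one, Matrix.one_mul, Matrix.mul_one,
      Matrix.one_mulVec] at H
    simp only [Matrix.conjTranspose_conjTranspose, Matrix.conjTranspose_mul]
    convert H using 1
    ring
  -- assemble
  refine ⟨X 1 0, X 0 1, Pm 1 1, hDpd, hBn.symm, hCn.symm, ?_, ?_, ?_⟩
  · rw [← hE2, hE1]
  · have := congrArg Matrix.conjTranspose hE3
    simpa [Matrix.conjTranspose_mul, Matrix.conjTranspose_conjTranspose] using this.symm
  · intro a b a' b' c c'
    have hXop : ∀ a b : Fin 2, Xop (X 1 0) (X 0 1) a b = X a b := by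
      intro a b
      fin_cases a <;> fin_cases b <;> simp only [Xop] <;> norm_num
      · exact hE1.symm
      · exact hX11.symm
    have h5 : (Matrix.of fun c c' : Fin N => ρ (a,b,c) (a',b',c'))
        = R * (X a b)ᴴ * X a' b' * R := by
      rw [block_eq, hrep a b a' b']
      simp only [Matrix.mul_assoc]
    rw [hXop, hXop]
    simp only [psqrt] at hRdef
    rw [← hRdef]
    exact congrFun (congrFun h5 c) c'

end
end

section
/- Let ρ be a PPT state on ℂ²⊗ℂ²⊗ℂ² with rank(ρ) = 2. Then there exist nonzero vectors e, f, g ∈ ℂ² such that ρ (e⊗f⊗g) = 0, i.e., the product vector e⊗f⊗g lies in the kernel of ρ. -/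
open Matrix BigOperators ComplexOrder

noncomputable section

/-! A matrix of rank two annihilates every vector `z` with `u₀ ⬝ z = u₁ ⬝ z = 0`, where `u₀, u₁`
span its row space. Fixing the third factor `g`, these two conditions on `e ⊗ f ⊗ g` read
`eᵀ A₀ f = eᵀ A₁ f = 0` for two `2 × 2` matrices. Over `ℂ` some `f ≠ 0` is sent by `A₀` and `A₁`
into a common line (a kernel vector of `A₁`, or an eigenvector of `A₁⁻¹ A₀`), and any `e ≠ 0`
orthogonal to that line solves both equations. -/

section Pencil

variable {K n : Type*} [Field K] [IsAlgClosed K] [Fintype n] [DecidableEq n]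

theorem Matrix.exists_mulVec_mem_line [Nonempty n] (A B : Matrix n n K) :
    ∃ f ≠ 0, ∃ (w : n → K) (a b : K), A *ᵥ f = a • w ∧ B *ᵥ f = b • w := by
  by_cases hB : B.det = 0
  · obtain ⟨f, hf, hBf⟩ := Matrix.exists_mulVec_eq_zero_iff.2 hB
    exact ⟨f, hf, A *ᵥ f, 1, 0, by simp, by simp [hBf]⟩
  · obtain ⟨μ, hμ⟩ := Module.End.exists_eigenvalue (Matrix.toLin' (B⁻¹ * A))
    obtain ⟨f, hf⟩ := hμ.exists_hasEigenvector
    refine ⟨f, hf.2, B *ᵥ f, μ, 1, ?_, by simp⟩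
    have hf' : B⁻¹ *ᵥ (A *ᵥ f) = μ • f := by
      rw [Matrix.mulVec_mulVec, ← Matrix.toLin'_apply, hf.apply_eq_smul]
    calc A *ᵥ f = B *ᵥ (B⁻¹ *ᵥ (A *ᵥ f)) := by
          rw [Matrix.mulVec_mulVec, Matrix.mul_nonsing_inv _ (isUnit_iff_ne_zero.2 hB),
            Matrix.one_mulVec]
      _ = μ • B *ᵥ f := by rw [hf', Matrix.mulVec_smul]

theorem Matrix.exists_ne_zero_dotProduct_mulVec_eq_zero [Nontrivial n] (A B : Matrix n n K) :
    ∃ e ≠ 0, ∃ f ≠ 0, e ⬝ᵥ A *ᵥ f = 0 ∧ e ⬝ᵥ B *ᵥ f = 0 := by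
  obtain ⟨f, hf, w, a, b, hAf, hBf⟩ := A.exists_mulVec_mem_line B
  obtain ⟨e, he, hew⟩ := exists_ne_zero_dotProduct_eq_zero w
  exact ⟨e, he, f, hf, by simp [hAf, hew], by simp [hBf, hew]⟩

end Pencil

theorem Matrix.exists_forall_dotProduct_eq_zero_imp_mulVec_eq_zero
    {K m n : Type*} [Field K] [Fintype m] [Fintype n] {r : ℕ}
    (ρ : Matrix m n K) (hρ : ρ.rank = r) :
    ∃ u : Fin r → n → K, ∀ z, (∀ j, u j ⬝ᵥ z = 0) → ρ *ᵥ z = 0 := by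
  rw [ρ.rank_eq_finrank_span_row] at hρ
  let b := Module.finBasisOfFinrankEq K _ hρ
  refine ⟨fun j => b j, fun z hz => funext fun i => ?_⟩
  have hrow : ρ.row i ∈ Submodule.span K (Set.range ρ.row) := Submodule.subset_span ⟨i, rfl⟩
  have hsum := congrArg Subtype.val (b.sum_repr ⟨_, hrow⟩)
  simp only [Submodule.coe_sum, Submodule.coe_smul] at hsum
  change ρ.row i ⬝ᵥ z = 0
  rw [← hsum, sum_dotProduct]
  simp [hz]

section ProductVectors

variable {N : ℕ}

def contractThird (v : Fin 2 × Fin 2 × Fin N → ℂ) (g : Fin N → ℂ) : Matrix (Fin 2) (Fin 2) ℂ :=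
  Matrix.of fun a b => ∑ c, v (a, b, c) * g c

theorem dotProduct_prodVec (v : Fin 2 × Fin 2 × Fin N → ℂ) (e f : Fin 2 → ℂ) (g : Fin N → ℂ) :
    v ⬝ᵥ prodVec e f g = e ⬝ᵥ contractThird v g *ᵥ f := by
  simp only [dotProduct, prodVec, contractThird, mulVec, Matrix.of_apply, Fintype.sum_prod_type,
    Finset.mul_sum, Finset.sum_mul]
  exact Finset.sum_congr rfl fun a _ => Finset.sum_congr rfl fun b _ =>
    Finset.sum_congr rfl fun c _ => by ring

theorem exists_dotProduct_prodVec_eq_zero (u : Fin 2 → Fin 2 × Fin 2 × Fin N → ℂ)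
    (g : Fin N → ℂ) : ∃ e ≠ 0, ∃ f ≠ 0, ∀ j, u j ⬝ᵥ prodVec e f g = 0 := by
  obtain ⟨e, he, f, hf, h0, h1⟩ :=
    (contractThird (u 0) g).exists_ne_zero_dotProduct_mulVec_eq_zero (contractThird (u 1) g)
  refine ⟨e, he, f, hf, Fin.forall_fin_two.2 ⟨?_, ?_⟩⟩ <;> rwa [dotProduct_prodVec]

end ProductVectors

theorem ppt_rank_two_product_kernel_general
    (ρ : Matrix (Fin 2 × Fin 2 × Fin 2) (Fin 2 × Fin 2 × Fin 2) ℂ)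
    (hrank : ρ.rank = 2) :
    ∃ e f g : Fin 2 → ℂ, e ≠ 0 ∧ f ≠ 0 ∧ g ≠ 0 ∧
      ρ.mulVec (prodVec e f g) = 0 := by
  obtain ⟨u, hu⟩ := ρ.exists_forall_dotProduct_eq_zero_imp_mulVec_eq_zero hrank
  obtain ⟨e, he, f, hf, hef⟩ := exists_dotProduct_prodVec_eq_zero u (Pi.single 0 1)
  exact ⟨e, f, Pi.single 0 1, he, hf, by simp, hu _ hef⟩

/-- Any three-qubit PPT state of rank 2 has a product vector in its kernel. -/
theorem ppt_rank_two_product_kernel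
    (ρ : Matrix (Fin 2 × Fin 2 × Fin 2) (Fin 2 × Fin 2 × Fin 2) ℂ)
    (hpos : ρ.PosSemidef) (hppt : IsPPT ρ) (hrank : ρ.rank = 2) :
    ∃ e f g : Fin 2 → ℂ, e ≠ 0 ∧ f ≠ 0 ∧ g ≠ 0 ∧
      ρ.mulVec (prodVec e f g) = 0 :=
  ppt_rank_two_product_kernel_general ρ hrank

end
end

section
/- For any two vectors ψ₁, ψ₂ ∈ ℂ²⊗ℂ²⊗ℂ² (i.e., ℂ⁸ indexed by Fin 2 × Fin 2 × Fin 2) there exist nonzero vectors e, f, g ∈ ℂ² such that the product vector e⊗f⊗g is orthogonal to both ψ₁ and ψ₂ with respect to the standard Hermitian inner product. -/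
open Matrix BigOperators ComplexOrder

noncomputable section

/-! Take `e = (1, 0)`. Then `⟨ψ, e ⊗ f ⊗ g⟩ = f ⬝ (M g)`, where `M` is the conjugated
`2 × 2` slice `ψ(0, ·, ·)`. For two vectors this asks for `f, g ≠ 0` with `f ⬝ M₁ g = f ⬝ M₂ g = 0`.
The determinant of the rows `M₁ g, M₂ g` is a binary quadratic form in `g`, which has a nontrivial
zero over `ℂ`; for such `g` the two rows are dependent, so some `f ≠ 0` is orthogonal to both. -/

theorem exists_ne_zero_binary_quadratic_eq_zero {K : Type*} [Field K] [IsAlgClosed K]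
    (a b c : K) : ∃ x : Fin 2 → K, x ≠ 0 ∧ a * x 0 ^ 2 + b * x 0 * x 1 + c * x 1 ^ 2 = 0 := by
  by_cases ha : a = 0
  · exact ⟨![1, 0], by simp, by simp [ha]⟩
  · obtain ⟨r, hr⟩ := IsAlgClosed.exists_root (Polynomial.C a * Polynomial.X ^ 2 +
      Polynomial.C b * Polynomial.X + Polynomial.C c) (by simp [Polynomial.degree_quadratic ha])
    refine ⟨![r, 1], by simp, ?_⟩
    simpa using hr

theorem det_of_mulVec_mulVec {R : Type*} [CommRing R] (M N : Matrix (Fin 2) (Fin 2) R)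
    (x : Fin 2 → R) :
    det (of ![M *ᵥ x, N *ᵥ x]) =
      (M 0 0 * N 1 0 - M 1 0 * N 0 0) * x 0 ^ 2 +
      (M 0 0 * N 1 1 + M 0 1 * N 1 0 - M 1 0 * N 0 1 - M 1 1 * N 0 0) * x 0 * x 1 +
      (M 0 1 * N 1 1 - M 1 1 * N 0 1) * x 1 ^ 2 := by
  simp only [det_fin_two, of_apply, Matrix.cons_val_zero, Matrix.cons_val_one, mulVec,
    dotProduct, Fin.sum_univ_two]
  ring

theorem exists_ne_zero_det_of_mulVec_mulVec_eq_zero {K : Type*} [Field K] [IsAlgClosed K]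
    (M N : Matrix (Fin 2) (Fin 2) K) : ∃ x ≠ 0, det (of ![M *ᵥ x, N *ᵥ x]) = 0 := by
  obtain ⟨x, hx, h⟩ := exists_ne_zero_binary_quadratic_eq_zero
    (M 0 0 * N 1 0 - M 1 0 * N 0 0)
    (M 0 0 * N 1 1 + M 0 1 * N 1 0 - M 1 0 * N 0 1 - M 1 1 * N 0 0)
    (M 0 1 * N 1 1 - M 1 1 * N 0 1)
  exact ⟨x, hx, (det_of_mulVec_mulVec M N x).trans h⟩

theorem exists_ne_zero_dotProduct_eq_zero_of_det_eq_zero {R : Type*} [CommRing R] [IsDomain R]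
    {u v : Fin 2 → R} (h : det (of ![u, v]) = 0) :
    ∃ y ≠ 0, y ⬝ᵥ u = 0 ∧ y ⬝ᵥ v = 0 := by
  obtain ⟨y, hy, hyuv⟩ := exists_mulVec_eq_zero_iff.mpr h
  refine ⟨y, hy, ?_, ?_⟩
  · simpa [dotProduct_comm] using congrFun hyuv 0
  · simpa [dotProduct_comm] using congrFun hyuv 1

def conjSliceZero {N : ℕ} (ψ : Fin 2 × Fin 2 × Fin N → ℂ) : Matrix (Fin 2) (Fin N) ℂ :=
  of fun b c => star (ψ (0, b, c))

theorem star_dotProduct_prodVec_single_zero {N : ℕ} (ψ : Fin 2 × Fin 2 × Fin N → ℂ)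
    (f : Fin 2 → ℂ) (g : Fin N → ℂ) :
    star ψ ⬝ᵥ prodVec (Pi.single 0 1) f g = f ⬝ᵥ (conjSliceZero ψ *ᵥ g) := by
  simp only [dotProduct, prodVec, conjSliceZero, mulVec, Fintype.sum_prod_type, Fin.sum_univ_two,
    Pi.star_apply, of_apply, Finset.mul_sum]
  simp [mul_comm, mul_left_comm, mul_assoc]

/-- For any two vectors in `ℂ²⊗ℂ²⊗ℂ²` there is a nonzero product vector orthogonal to both. -/
theorem exists_product_vector_orthogonal_to_two
    (ψ₁ ψ₂ : Fin 2 × Fin 2 × Fin 2 → ℂ) :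
    ∃ e f g : Fin 2 → ℂ, e ≠ 0 ∧ f ≠ 0 ∧ g ≠ 0 ∧
      star ψ₁ ⬝ᵥ prodVec e f g = 0 ∧ star ψ₂ ⬝ᵥ prodVec e f g = 0 := by
  obtain ⟨g, hg, hdet⟩ :=
    exists_ne_zero_det_of_mulVec_mulVec_eq_zero (conjSliceZero ψ₁) (conjSliceZero ψ₂)
  obtain ⟨f, hf, hf₁, hf₂⟩ := exists_ne_zero_dotProduct_eq_zero_of_det_eq_zero hdet
  refine ⟨Pi.single 0 1, f, g, by simp, hf, hg, ?_, ?_⟩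
  · rw [star_dotProduct_prodVec_single_zero, hf₁]
  · rw [star_dotProduct_prodVec_single_zero, hf₂]

end
end

section
/- Let ρ be a PPT state supported on ℂ²⊗ℂ²⊗ℂ² with rank(ρ) = 2. Then ρ is separable. -/
open Matrix BigOperators ComplexOrder

noncomputable section

namespace PRTS

set_option maxHeartbeats 2000000

abbrev JJ := Fin 2 × Fin 2
abbrev II := Fin 2 × Fin 2 × Fin 2

def cdot {n : Type*} [Fintype n] (p q : n → ℂ) : ℂ := ∑ j, (starRingEnd ℂ) (p j) * q j

lemma sumII (f : II → ℂ) : ∑ i, f i = f (0,0,0) + f (0,0,1) + f (0,1,0) + f (0,1,1)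
    + f (1,0,0) + f (1,0,1) + f (1,1,0) + f (1,1,1) := by
  rw [Fintype.sum_prod_type]
  simp only [Fintype.sum_prod_type, Fin.sum_univ_two]
  ring

lemma sumJJ (f : JJ → ℂ) : ∑ j, f j = f (0,0) + f (0,1) + f (1,0) + f (1,1) := by
  rw [Fintype.sum_prod_type]
  simp only [Fin.sum_univ_two]
  ring

lemma cdot_conj {n : Type*} [Fintype n] (p q : n → ℂ) :
    (starRingEnd ℂ) (cdot p q) = cdot q p := by
  simp only [cdot, map_sum, _root_.map_mul, Complex.conj_conj]
  exact Finset.sum_congr rfl fun j _ => mul_comm _ _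

lemma cdot_self_real {n : Type*} [Fintype n] (p : n → ℂ) :
    cdot p p = ((∑ j, Complex.normSq (p j) : ℝ) : ℂ) := by
  simp only [cdot, Complex.ofReal_sum]
  exact Finset.sum_congr rfl fun j _ => (Complex.normSq_eq_conj_mul_self).symm

lemma cdot_self_eq_zero {n : Type*} [Fintype n] {p : n → ℂ} (h : cdot p p = 0) : p = 0 := by
  rw [cdot_self_real] at h
  have h' : (∑ j, Complex.normSq (p j) : ℝ) = 0 := by exact_mod_cast h
  have hz : ∀ j, Complex.normSq (p j) = 0 := by
    intro j
    have := Finset.sum_eq_zero_iff_of_nonneg (fun i _ => Complex.normSq_nonneg (p i)) |>.mp h'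
    exact this j (Finset.mem_univ j)
  funext j
  exact Complex.normSq_eq_zero.mp (hz j)

lemma cdot_self_ne_zero {n : Type*} [Fintype n] {p : n → ℂ} (h : p ≠ 0) : cdot p p ≠ 0 :=
  fun hc => h (cdot_self_eq_zero hc)

lemma cdot_smul_left {n : Type*} [Fintype n] (z : ℂ) (p q : n → ℂ) :
    cdot (fun j => z * p j) q = (starRingEnd ℂ) z * cdot p q := by
  simp only [cdot, _root_.map_mul, Finset.mul_sum]
  exact Finset.sum_congr rfl fun j _ => by ring

/-- the elementary quadratic optimization. -/
lemma quad_aux {X Y : ℝ} (hX : 0 ≤ X) (hY : 0 ≤ Y) {w : ℂ}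
    (h : ∀ z : ℂ, 0 ≤ X + Complex.normSq z * Y + 2 * (z * w).re) :
    Complex.normSq w ≤ X * Y := by
  rcases eq_or_lt_of_le hY with hY0 | hYpos
  · -- Y = 0 : show w = 0
    have hw : Complex.normSq w = 0 := by
      by_contra hne
      have hpos : 0 < Complex.normSq w := lt_of_le_of_ne (Complex.normSq_nonneg w) (Ne.symm hne)
      set t : ℝ := (X + 1) / (2 * Complex.normSq w) with ht
      have h1 := h (-(t:ℂ) * (starRingEnd ℂ) w)
      have hre : ((-(t:ℂ) * (starRingEnd ℂ) w) * w).re = -t * Complex.normSq w := by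
        have : (-(t:ℂ) * (starRingEnd ℂ) w) * w = -(t:ℂ) * ((Complex.normSq w : ℝ) : ℂ) := by
          rw [mul_assoc]
          congr 1
          rw [← Complex.normSq_eq_conj_mul_self]
        rw [this]
        simp [Complex.ofReal_mul]
      rw [hre, ← hY0] at h1
      have ht' : t * Complex.normSq w = (X + 1) / 2 := by
        rw [ht, div_mul_eq_mul_div, div_eq_div_iff (mul_pos two_pos hpos).ne' two_ne_zero]
        ring
      nlinarith [h1]
    simp [← hY0, hw]
  · -- Y > 0
    have h1 := h ((-(1/Y) : ℝ) * (starRingEnd ℂ) w)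
    have hre : (((-(1/Y) : ℝ) : ℂ) * (starRingEnd ℂ) w * w).re
        = -(1/Y) * Complex.normSq w := by
      have : ((-(1/Y) : ℝ) : ℂ) * (starRingEnd ℂ) w * w
          = ((-(1/Y) : ℝ) : ℂ) * ((Complex.normSq w : ℝ) : ℂ) := by
        rw [mul_assoc]
        congr 1
        rw [← Complex.normSq_eq_conj_mul_self]
      rw [this]
      simp [← Complex.ofReal_mul]
    have hnsq : Complex.normSq (((-(1/Y) : ℝ) : ℂ) * (starRingEnd ℂ) w)
        = (1/Y)^2 * Complex.normSq w := by
      rw [Complex.normSq_mul, Complex.normSq_conj, Complex.normSq_ofReal]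
      ring
    rw [hre, hnsq] at h1
    have hID : X + (1 / Y) ^ 2 * Complex.normSq w * Y + 2 * (-(1 / Y) * Complex.normSq w)
        = X - Complex.normSq w / Y := by
      field_simp
      ring
    rw [hID] at h1
    have := (div_le_iff₀ hYpos).mp (by linarith : Complex.normSq w / Y ≤ X)
    linarith

lemma cdot_expand (p q : JJ → ℂ) : cdot p q = (starRingEnd ℂ) (p (0,0)) * q (0,0)
    + (starRingEnd ℂ) (p (0,1)) * q (0,1) + (starRingEnd ℂ) (p (1,0)) * q (1,0)
    + (starRingEnd ℂ) (p (1,1)) * q (1,1) := by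
  rw [cdot, sumJJ]

/-- The master inequality obtained from positivity of the `A`-partial transpose. -/
lemma masterA (ρ : Matrix II II ℂ) (hA : (ptA ρ).PosSemidef) (ψ φ : II → ℂ)
    (hd : ∀ x y, ρ x y = ψ x * (starRingEnd ℂ) (ψ y) + φ x * (starRingEnd ℂ) (φ y))
    (a c b d : JJ → ℂ)
    (ha : ∀ j, a j = ψ (0, j)) (hc : ∀ j, c j = φ (0, j))
    (hb : ∀ j, b j = ψ (1, j)) (hdd : ∀ j, d j = φ (1, j)) (u v : JJ → ℂ) :
    Complex.normSq (cdot u b * (starRingEnd ℂ) (cdot v a)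
        + cdot u d * (starRingEnd ℂ) (cdot v c)) ≤
      (Complex.normSq (cdot u a) + Complex.normSq (cdot u c)) *
      (Complex.normSq (cdot v b) + Complex.normSq (cdot v d)) := by
  -- the quadratic-form identity
  have key : ∀ u v : JJ → ℂ,
      star (fun i : II => ![u, v] i.1 i.2) ⬝ᵥ (ptA ρ *ᵥ (fun i : II => ![u, v] i.1 i.2)) =
        (cdot u a * (starRingEnd ℂ) (cdot u a)
        + cdot u c * (starRingEnd ℂ) (cdot u c)
        + cdot v b * (starRingEnd ℂ) (cdot v b)
        + cdot v d * (starRingEnd ℂ) (cdot v d))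
        + ((cdot u b * (starRingEnd ℂ) (cdot v a) + cdot u d * (starRingEnd ℂ) (cdot v c))
          + (starRingEnd ℂ) (cdot u b * (starRingEnd ℂ) (cdot v a)
            + cdot u d * (starRingEnd ℂ) (cdot v c))) := by
    intro u v
    rw [dotProduct, sumII]
    simp only [mulVec, dotProduct, Pi.star_apply, RCLike.star_def, sumII, cdot_expand, ptA, hd,
      ha, hc, hb, hdd, map_add, _root_.map_mul, Complex.conj_conj,
      Matrix.cons_val_zero, Matrix.cons_val_one, Matrix.head_cons]
    ring
  -- real-part form
  have hre : ∀ u v : JJ → ℂ,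
      0 ≤ (Complex.normSq (cdot u a) + Complex.normSq (cdot u c))
        + (Complex.normSq (cdot v b) + Complex.normSq (cdot v d))
        + 2 * ((cdot u b * (starRingEnd ℂ) (cdot v a)).re
            + (cdot u d * (starRingEnd ℂ) (cdot v c)).re) := by
    intro u v
    have h0 := hA.dotProduct_mulVec_nonneg (fun i : II => ![u, v] i.1 i.2)
    rw [key u v] at h0
    have h1 := (Complex.le_def.mp h0).1
    simp only [Complex.zero_re, Complex.add_re, Complex.conj_re] at h1
    have e1 : ∀ z : ℂ, (z * (starRingEnd ℂ) z).re = Complex.normSq z := by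
      intro z; rw [Complex.mul_conj]; simp
    rw [e1, e1, e1, e1] at h1
    linarith
  -- scaling
  set w := cdot u b * (starRingEnd ℂ) (cdot v a) + cdot u d * (starRingEnd ℂ) (cdot v c) with hw
  apply quad_aux (X := Complex.normSq (cdot u a) + Complex.normSq (cdot u c))
    (Y := Complex.normSq (cdot v b) + Complex.normSq (cdot v d))
    (add_nonneg (Complex.normSq_nonneg _) (Complex.normSq_nonneg _))
    (add_nonneg (Complex.normSq_nonneg _) (Complex.normSq_nonneg _))
  intro z
  have h2 := hre u (fun j => z * v j)
  simp only [cdot_smul_left, _root_.map_mul, Complex.conj_conj, Complex.normSq_mul,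
    Complex.normSq_conj] at h2
  have e4 : 2 * (z * w).re = 2 * ((cdot u b * (z * (starRingEnd ℂ) (cdot v a))).re
      + (cdot u d * (z * (starRingEnd ℂ) (cdot v c))).re) := by
    rw [hw, mul_add, Complex.add_re]
    ring_nf
  rw [e4]
  nlinarith [h2]

lemma cdot_add_right {n : Type*} [Fintype n] (p q r : n → ℂ) :
    cdot p (fun j => q j + r j) = cdot p q + cdot p r := by
  simp only [cdot, mul_add, Finset.sum_add_distrib]

lemma cdot_smul_right {n : Type*} [Fintype n] (z : ℂ) (p q : n → ℂ) :
    cdot p (fun j => z * q j) = z * cdot p q := by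
  simp only [cdot, Finset.mul_sum]
  exact Finset.sum_congr rfl fun j _ => by ring

lemma cdot_sub_first {n : Type*} [Fintype n] (p q r : n → ℂ) :
    cdot (fun j => p j - q j) r = cdot p r - cdot q r := by
  simp only [cdot, map_sub, sub_mul, Finset.sum_sub_distrib]

/-- If `q` is orthogonal to everything orthogonal to `p`, then `q ∥ p`. -/
lemma parallel_of_orth {n : Type*} [Fintype n] (p q : n → ℂ) (hp : p ≠ 0)
    (h : ∀ u : n → ℂ, cdot u p = 0 → cdot u q = 0) : ∃ γ : ℂ, ∀ j, q j = γ * p j := by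
  have hpp : cdot p p ≠ 0 := cdot_self_ne_zero hp
  set γ : ℂ := cdot p q / cdot p p with hγ
  set u : n → ℂ := fun j => q j - γ * p j with hu
  have hup : cdot u p = 0 := by
    rw [hu]
    have : cdot (fun j => q j - γ * p j) p = cdot q p - (starRingEnd ℂ) γ * cdot p p := by
      rw [cdot_sub_first]
      congr 1
      have : cdot (fun j => γ * p j) p = (starRingEnd ℂ) γ * cdot p p := by
        simp only [cdot, _root_.map_mul, Finset.mul_sum]
        exact Finset.sum_congr rfl fun j _ => by ring
      rw [this]
    rw [this, hγ, map_div₀, cdot_conj, cdot_self_real]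
    rw [Complex.conj_ofReal]
    rw [← cdot_self_real]
    field_simp
    ring
  have huq : cdot u q = 0 := h u hup
  have e : cdot u (fun j => q j - γ * p j) = cdot u q - γ * cdot u p := by
    have e1 : (fun j => q j - γ * p j) = fun j => q j + (-γ) * p j := by funext j; ring
    rw [e1, cdot_add_right, cdot_smul_right]; ring
  have huu : cdot u u = 0 := by
    have e2 : cdot u u = cdot u (fun j => q j - γ * p j) := rfl
    rw [e2, e, huq, hup]; ring
  have := cdot_self_eq_zero huu
  exact ⟨γ, fun j => by have := congrFun this j; simp [hu] at this; linear_combination this⟩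

/-- recombination of a two-term decomposition by a unitary. -/
lemma recombine (ρ : Matrix (Fin 2 × Fin 2 × Fin 2) (Fin 2 × Fin 2 × Fin 2) ℂ) (ψ φ : Fin 2 × Fin 2 × Fin 2 → ℂ)
    (hd : ∀ x y, ρ x y = ψ x * (starRingEnd ℂ) (ψ y) + φ x * (starRingEnd ℂ) (φ y))
    (s t : ℂ) (hst : (starRingEnd ℂ) s * s + (starRingEnd ℂ) t * t = 1) :
    ∀ x y, ρ x y = (s * ψ x + t * φ x) * (starRingEnd ℂ) (s * ψ y + t * φ y)
      + (-(starRingEnd ℂ) t * ψ x + (starRingEnd ℂ) s * φ x)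
        * (starRingEnd ℂ) (-(starRingEnd ℂ) t * ψ y + (starRingEnd ℂ) s * φ y) := by
  intro x y
  rw [hd x y]
  simp only [map_add, _root_.map_mul, map_neg, Complex.conj_conj]
  linear_combination (ψ x * (starRingEnd ℂ) (ψ y) + φ x * (starRingEnd ℂ) (φ y)) * hst.symm

lemma cdot_comb_right {n : Type*} [Fintype n] (p q r : n → ℂ) (x y : ℂ) :
    cdot p (fun j => x * q j + y * r j) = x * cdot p q + y * cdot p r := by
  rw [cdot_add_right, cdot_smul_right, cdot_smul_right]

lemma cdot_comb_left {n : Type*} [Fintype n] (p q r : n → ℂ) (x y : ℂ) :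
    cdot (fun j => x * q j + y * r j) p
      = (starRingEnd ℂ) x * cdot q p + (starRingEnd ℂ) y * cdot r p := by
  rw [← cdot_conj, cdot_comb_right, map_add, _root_.map_mul, _root_.map_mul,
    cdot_conj, cdot_conj]

/-- independence makes the Gram determinant nonzero. -/
lemma gram_ne_zero {n : Type*} [Fintype n] (a c : n → ℂ)
    (hind : ∀ s t : ℂ, (∀ j, s * a j + t * c j = 0) → s = 0 ∧ t = 0) :
    cdot a a * cdot c c - cdot a c * cdot c a ≠ 0 := by
  intro h0
  set z : n → ℂ := fun j => cdot a a * c j + (-(cdot a c)) * a j with hz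
  have haz : cdot a z = 0 := by
    rw [hz, cdot_comb_right]; ring
  have hcz : cdot c z = 0 := by
    rw [hz, cdot_comb_right]; linear_combination h0
  have hzz : cdot z z = 0 := by
    have : cdot z z = (starRingEnd ℂ) (cdot a a) * cdot c z
        + (starRingEnd ℂ) (-(cdot a c)) * cdot a z := by
      conv_lhs => rw [show cdot z z = cdot (fun j => cdot a a * c j + (-(cdot a c)) * a j) z
        from rfl]
      rw [cdot_comb_left]
    rw [this, haz, hcz]; ring
  have hz0 := cdot_self_eq_zero hzz
  have hcomb : ∀ j, (-(cdot a c)) * a j + cdot a a * c j = 0 := by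
    intro j
    have := congrFun hz0 j
    simp only [hz, Pi.zero_apply] at this
    linear_combination this
  have h1 := hind (-(cdot a c)) (cdot a a) hcomb
  have haa : cdot a a = 0 := h1.2
  have ha0 := cdot_self_eq_zero haa
  have h2 := hind 1 0 (fun j => by simp [congrFun ha0 j])
  exact one_ne_zero h2.1

/-- surjectivity of `u ↦ (⟨u,a⟩, ⟨u,c⟩)` given independence. -/
lemma exists_coords {n : Type*} [Fintype n] (a c : n → ℂ)
    (hdet : cdot a a * cdot c c - cdot a c * cdot c a ≠ 0) (x0 x1 : ℂ) :
    ∃ u : n → ℂ, cdot u a = x0 ∧ cdot u c = x1 := by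
  set dt := cdot a a * cdot c c - cdot a c * cdot c a with hdt
  set r := (starRingEnd ℂ) ((x0 * cdot c c - cdot c a * x1) / dt) with hr
  set s := (starRingEnd ℂ) ((cdot a a * x1 - cdot a c * x0) / dt) with hs
  refine ⟨fun j => r * a j + s * c j, ?_, ?_⟩
  · rw [cdot_comb_left, hr, hs, Complex.conj_conj, Complex.conj_conj]
    field_simp
    ring
  · rw [cdot_comb_left, hr, hs, Complex.conj_conj, Complex.conj_conj]
    field_simp
    ring

/-- span representation given orthogonality condition. -/
lemma span_coeffs {n : Type*} [Fintype n] (a c b : n → ℂ)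
    (hdet : cdot a a * cdot c c - cdot a c * cdot c a ≠ 0)
    (horth : ∀ u : n → ℂ, cdot u a = 0 → cdot u c = 0 → cdot u b = 0) :
    ∃ β0 β1 : ℂ, ∀ j, b j = β0 * a j + β1 * c j := by
  set dt := cdot a a * cdot c c - cdot a c * cdot c a with hdt
  set β0 := (cdot a b * cdot c c - cdot a c * cdot c b) / dt with hβ0
  set β1 := (cdot a a * cdot c b - cdot c a * cdot a b) / dt with hβ1
  set u : n → ℂ := fun j => b j + ((-β0) * a j + (-β1) * c j) with hu
  have hab : cdot a u = 0 := by
    have e : cdot a u = cdot a b + ((-β0) * cdot a a + (-β1) * cdot a c) := by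
      conv_lhs => rw [show cdot a u = cdot a (fun j => b j + ((-β0) * a j + (-β1) * c j))
        from rfl]
      rw [cdot_add_right, cdot_comb_right]
    rw [e, hβ0, hβ1]
    field_simp
    ring
  have hcb : cdot c u = 0 := by
    have e : cdot c u = cdot c b + ((-β0) * cdot c a + (-β1) * cdot c c) := by
      conv_lhs => rw [show cdot c u = cdot c (fun j => b j + ((-β0) * a j + (-β1) * c j))
        from rfl]
      rw [cdot_add_right, cdot_comb_right]
    rw [e, hβ0, hβ1]
    field_simp
    ring
  have hua : cdot u a = 0 := by rw [← cdot_conj, hab]; simp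
  have huc : cdot u c = 0 := by rw [← cdot_conj, hcb]; simp
  have hub : cdot u b = 0 := horth u hua huc
  have huu : cdot u u = 0 := by
    have e : cdot u u = cdot u b + ((-β0) * cdot u a + (-β1) * cdot u c) := by
      conv_lhs => rw [show cdot u u = cdot u (fun j => b j + ((-β0) * a j + (-β1) * c j))
        from rfl]
      rw [cdot_add_right, cdot_comb_right]
    rw [e, hua, huc, hub]; ring
  have h0 := cdot_self_eq_zero huu
  refine ⟨β0, β1, fun j => ?_⟩
  have := congrFun h0 j
  simp only [hu, Pi.zero_apply] at this
  linear_combination this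

lemma conj_mul_self_sum_zero {z w : ℂ}
    (h : z * (starRingEnd ℂ) z + w * (starRingEnd ℂ) w = 0) : z = 0 ∧ w = 0 := by
  rw [Complex.mul_conj, Complex.mul_conj] at h
  have : (Complex.normSq z + Complex.normSq w : ℝ) = 0 := by exact_mod_cast h
  constructor
  · exact Complex.normSq_eq_zero.mp (by nlinarith [Complex.normSq_nonneg z, Complex.normSq_nonneg w])
  · exact Complex.normSq_eq_zero.mp (by nlinarith [Complex.normSq_nonneg z, Complex.normSq_nonneg w])

/-- orthonormal eigenbasis of a normal 2×2 matrix `T = [[a,b],[c,d]]`, scalar form. -/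
lemma normal2 (a b c d : ℂ)
    (h00 : b * (starRingEnd ℂ) b = (starRingEnd ℂ) c * c)
    (h01 : a * (starRingEnd ℂ) c + b * (starRingEnd ℂ) d
      = (starRingEnd ℂ) a * b + (starRingEnd ℂ) c * d) :
    ∃ W0 W1 κ1 κ2 : ℂ,
      ((starRingEnd ℂ) W0 * W0 + (starRingEnd ℂ) W1 * W1 = 1)
      ∧ (a * W0 + b * W1 = κ1 * W0) ∧ (c * W0 + d * W1 = κ1 * W1)
      ∧ (a * (-(starRingEnd ℂ) W1) + b * ((starRingEnd ℂ) W0) = κ2 * (-(starRingEnd ℂ) W1))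
      ∧ (c * (-(starRingEnd ℂ) W1) + d * ((starRingEnd ℂ) W0) = κ2 * ((starRingEnd ℂ) W0)) := by
  -- eigenvalue
  obtain ⟨s, hs⟩ := IsAlgClosed.exists_pow_nat_eq ((a - d)^2 + 4*b*c) (n := 2) (by norm_num)
  set κ := (a + d + s)/2 with hκ
  have hdet : (a - κ) * (d - κ) - b * c = 0 := by
    rw [hκ]; field_simp; linear_combination hs
  -- kernel vector
  obtain ⟨k0, k1, hk1, hk2, hknz⟩ : ∃ k0 k1 : ℂ, (a - κ) * k0 + b * k1 = 0
      ∧ c * k0 + (d - κ) * k1 = 0 ∧ ¬(k0 = 0 ∧ k1 = 0) := by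
    by_cases h1 : b = 0 ∧ a - κ = 0
    · by_cases h2 : d - κ = 0 ∧ c = 0
      · exact ⟨1, 0, by rw [h1.2, h1.1]; ring, by rw [h2.2, h2.1]; ring, by simp⟩
      · refine ⟨d - κ, -c, by rw [h1.2, h1.1]; ring, by ring, ?_⟩
        rintro ⟨e1, e2⟩
        exact h2 ⟨e1, by linear_combination -e2⟩
    · refine ⟨b, -(a - κ), by ring, by linear_combination -hdet, ?_⟩
      rintro ⟨e1, e2⟩
      exact h1 ⟨e1, by linear_combination -e2⟩
  -- normalize
  set nr := Real.sqrt (Complex.normSq k0 + Complex.normSq k1) with hnr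
  have hnrpos : 0 < nr := by
    rw [hnr]
    apply Real.sqrt_pos.mpr
    rcases (not_and_or.mp hknz) with h | h
    · have := Complex.normSq_pos.mpr h
      nlinarith [Complex.normSq_nonneg k1]
    · have := Complex.normSq_pos.mpr h
      nlinarith [Complex.normSq_nonneg k0]
  have hnrne : (nr : ℂ) ≠ 0 := by exact_mod_cast ne_of_gt hnrpos
  set W0 := k0 / nr with hW0
  set W1 := k1 / nr with hW1
  have hunit : (starRingEnd ℂ) W0 * W0 + (starRingEnd ℂ) W1 * W1 = 1 := by
    rw [hW0, hW1]
    rw [map_div₀, map_div₀, Complex.conj_ofReal]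
    have e : (starRingEnd ℂ) k0 * k0 + (starRingEnd ℂ) k1 * k1
        = ((Complex.normSq k0 + Complex.normSq k1 : ℝ) : ℂ) := by
      push_cast
      rw [Complex.normSq_eq_conj_mul_self, Complex.normSq_eq_conj_mul_self]
    have e2 : ((nr : ℂ) * nr) = ((Complex.normSq k0 + Complex.normSq k1 : ℝ) : ℂ) := by
      rw [← Complex.ofReal_mul]
      norm_cast
      rw [hnr]
      exact Real.mul_self_sqrt (add_nonneg (Complex.normSq_nonneg _) (Complex.normSq_nonneg _))
    field_simp
    rw [e, ← e2]
    ring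
  have hB0 : a * W0 + b * W1 = κ * W0 := by
    rw [hW0, hW1]
    field_simp
    linear_combination hk1
  have hB1 : c * W0 + d * W1 = κ * W1 := by
    rw [hW0, hW1]
    field_simp
    linear_combination hk2
  -- adjoint eigen-equation from normality
  have hB0c : (starRingEnd ℂ) a * (starRingEnd ℂ) W0 + (starRingEnd ℂ) b * (starRingEnd ℂ) W1
      = (starRingEnd ℂ) κ * (starRingEnd ℂ) W0 := by
    have := congrArg (starRingEnd ℂ) hB0
    simpa [map_add, _root_.map_mul] using this
  have hB1c : (starRingEnd ℂ) c * (starRingEnd ℂ) W0 + (starRingEnd ℂ) d * (starRingEnd ℂ) W1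
      = (starRingEnd ℂ) κ * (starRingEnd ℂ) W1 := by
    have := congrArg (starRingEnd ℂ) hB1
    simpa [map_add, _root_.map_mul] using this
  have h01c : (starRingEnd ℂ) a * c + (starRingEnd ℂ) b * d
      = a * (starRingEnd ℂ) b + c * (starRingEnd ℂ) d := by
    have := congrArg (starRingEnd ℂ) h01
    simpa [map_add, _root_.map_mul] using this
  have key0 : ((starRingEnd ℂ) a * W0 + (starRingEnd ℂ) c * W1 - (starRingEnd ℂ) κ * W0)
        * (a * (starRingEnd ℂ) W0 + c * (starRingEnd ℂ) W1 - κ * (starRingEnd ℂ) W0)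
      + ((starRingEnd ℂ) b * W0 + (starRingEnd ℂ) d * W1 - (starRingEnd ℂ) κ * W1)
        * (b * (starRingEnd ℂ) W0 + d * (starRingEnd ℂ) W1 - κ * (starRingEnd ℂ) W1) = 0 := by
    linear_combination ((starRingEnd ℂ) W0 * W0 - (starRingEnd ℂ) W1 * W1) * h00
      + ((starRingEnd ℂ) W0 * W1) * h01
      + ((starRingEnd ℂ) W1 * W0) * h01c
      + ((starRingEnd ℂ) a * (starRingEnd ℂ) W0 + (starRingEnd ℂ) b * (starRingEnd ℂ) W1
          - (starRingEnd ℂ) κ * (starRingEnd ℂ) W0) * hB0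
      + ((starRingEnd ℂ) c * (starRingEnd ℂ) W0 + (starRingEnd ℂ) d * (starRingEnd ℂ) W1
          - (starRingEnd ℂ) κ * (starRingEnd ℂ) W1) * hB1
  have key : ((starRingEnd ℂ) a * W0 + (starRingEnd ℂ) c * W1 - (starRingEnd ℂ) κ * W0)
        * (starRingEnd ℂ) ((starRingEnd ℂ) a * W0 + (starRingEnd ℂ) c * W1 - (starRingEnd ℂ) κ * W0)
      + ((starRingEnd ℂ) b * W0 + (starRingEnd ℂ) d * W1 - (starRingEnd ℂ) κ * W1)
        * (starRingEnd ℂ) ((starRingEnd ℂ) b * W0 + (starRingEnd ℂ) d * W1 - (starRingEnd ℂ) κ * W1)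
      = 0 := by
    simp only [map_add, map_sub, _root_.map_mul, Complex.conj_conj]
    linear_combination key0
  obtain ⟨hA0, hA1⟩ := conj_mul_self_sum_zero key
  -- conjugate versions
  have f0 : a * (starRingEnd ℂ) W0 + c * (starRingEnd ℂ) W1 = κ * (starRingEnd ℂ) W0 := by
    have := congrArg (starRingEnd ℂ) hA0
    simp only [map_add, map_sub, _root_.map_mul, Complex.conj_conj, map_zero] at this
    linear_combination this
  have f1 : b * (starRingEnd ℂ) W0 + d * (starRingEnd ℂ) W1 = κ * (starRingEnd ℂ) W1 := by
    have := congrArg (starRingEnd ℂ) hA1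
    simp only [map_add, map_sub, _root_.map_mul, Complex.conj_conj, map_zero] at this
    linear_combination this
  have hzero : (starRingEnd ℂ) W0 * (a * (-(starRingEnd ℂ) W1) + b * ((starRingEnd ℂ) W0))
      + (starRingEnd ℂ) W1 * (c * (-(starRingEnd ℂ) W1) + d * ((starRingEnd ℂ) W0)) = 0 := by
    linear_combination (-(starRingEnd ℂ) W1) * f0 + ((starRingEnd ℂ) W0) * f1
  refine ⟨W0, W1, κ,
    -W1 * (a * (-(starRingEnd ℂ) W1) + b * ((starRingEnd ℂ) W0))
      + W0 * (c * (-(starRingEnd ℂ) W1) + d * ((starRingEnd ℂ) W0)),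
    hunit, hB0, hB1, ?_, ?_⟩
  · linear_combination (-(a * (-(starRingEnd ℂ) W1) + b * ((starRingEnd ℂ) W0))) * hunit
      + W0 * hzero
  · linear_combination (-(c * (-(starRingEnd ℂ) W1) + d * ((starRingEnd ℂ) W0))) * hunit
      + W1 * hzero

lemma conj_eq_zero' {z : ℂ} (h : (starRingEnd ℂ) z = 0) : z = 0 := by
  have := congrArg (starRingEnd ℂ) h
  simpa using this

lemma cdot_zero_right {n : Type*} [Fintype n] (p : n → ℂ) :
    cdot p (fun _ => 0) = 0 := by simp [cdot]

/-- first branch : the Alice-part of `x₁` vanishes identically. -/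
lemma caseA_conclusion (ρ : Matrix II II ℂ) (hA : (ptA ρ).PosSemidef) (x₁ x₂ : II → ℂ)
    (hd2 : ∀ x y, ρ x y = x₁ x * (starRingEnd ℂ) (x₁ y) + x₂ x * (starRingEnd ℂ) (x₂ y))
    (h0 : ∀ j, x₁ (0, j) = 0) :
    (∀ j : JJ, x₂ (0, j) = 0) ∨ (∃ γ : ℂ, ∀ j, x₂ (1, j) = γ * x₂ (0, j)) := by
  by_cases hp : (fun j => x₂ (0, j)) = 0
  · exact Or.inl (fun j => congrFun hp j)
  · right
    set p : JJ → ℂ := fun j => x₂ (0, j) with hpdef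
    set q : JJ → ℂ := fun j => x₂ (1, j) with hqdef
    have horth : ∀ u : JJ → ℂ, cdot u p = 0 → cdot u q = 0 := by
      intro u hup
      have hm := masterA ρ hA x₁ x₂ hd2 (fun _ => 0) p (fun j => x₁ (1, j)) q
        (fun j => (h0 j).symm) (fun _ => rfl) (fun _ => rfl) (fun _ => rfl) u p
      rw [cdot_zero_right, cdot_zero_right, hup] at hm
      simp only [Complex.normSq_zero, map_zero, mul_zero, zero_add, zero_mul] at hm
      have h2 : Complex.normSq (cdot u q * (starRingEnd ℂ) (cdot p p)) = 0 := le_antisymm hm (Complex.normSq_nonneg _)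
      have h3 := Complex.normSq_eq_zero.mp h2
      have h4 := mul_eq_zero.mp h3
      rcases h4 with h | h
      · exact h
      · exact absurd (conj_eq_zero' h) (cdot_self_ne_zero hp)
    obtain ⟨γ, hγ⟩ := parallel_of_orth p q hp horth
    exact ⟨γ, hγ⟩

/-- the core lemma: a rank-two decomposition can be replaced by one made of
`A`-product vectors. -/
lemma coreA (ρ : Matrix II II ℂ) (hA : (ptA ρ).PosSemidef) (ψ φ : II → ℂ)
    (hd : ∀ x y, ρ x y = ψ x * (starRingEnd ℂ) (ψ y) + φ x * (starRingEnd ℂ) (φ y)) :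
    ∃ (e₁ e₂ : Fin 2 → ℂ) (h₁ h₂ : JJ → ℂ), ∀ x y : II,
      ρ x y = (e₁ x.1 * h₁ x.2) * (starRingEnd ℂ) (e₁ y.1 * h₁ y.2)
            + (e₂ x.1 * h₂ x.2) * (starRingEnd ℂ) (e₂ y.1 * h₂ y.2) := by
  classical
  set a : JJ → ℂ := fun j => ψ (0, j) with hadef
  set c : JJ → ℂ := fun j => φ (0, j) with hcdef
  set b : JJ → ℂ := fun j => ψ (1, j) with hbdef
  set d : JJ → ℂ := fun j => φ (1, j) with hddef
  by_cases hdep : ∃ s t : ℂ, ¬(s = 0 ∧ t = 0) ∧ (∀ j, s * a j + t * c j = 0)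
  · -- dependent case
    obtain ⟨s, t, hst, hcomb⟩ := hdep
    have hpos : 0 < Complex.normSq s + Complex.normSq t := by
      rcases not_and_or.mp hst with h | h
      · have := Complex.normSq_pos.mpr h; nlinarith [Complex.normSq_nonneg t]
      · have := Complex.normSq_pos.mpr h; nlinarith [Complex.normSq_nonneg s]
    set nr := Real.sqrt (Complex.normSq s + Complex.normSq t) with hnr
    have hnrpos : 0 < nr := Real.sqrt_pos.mpr hpos
    have hnrne : (nr : ℂ) ≠ 0 := by exact_mod_cast ne_of_gt hnrpos
    set s' := s / nr with hs'
    set t' := t / nr with ht'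
    have hunit : (starRingEnd ℂ) s' * s' + (starRingEnd ℂ) t' * t' = 1 := by
      rw [hs', ht', map_div₀, map_div₀, Complex.conj_ofReal]
      have e : (starRingEnd ℂ) s * s + (starRingEnd ℂ) t * t
          = ((Complex.normSq s + Complex.normSq t : ℝ) : ℂ) := by
        push_cast
        rw [Complex.normSq_eq_conj_mul_self, Complex.normSq_eq_conj_mul_self]
      have e2 : ((nr : ℂ) * nr) = ((Complex.normSq s + Complex.normSq t : ℝ) : ℂ) := by
        rw [← Complex.ofReal_mul]
        norm_cast
        rw [hnr]
        exact Real.mul_self_sqrt (le_of_lt hpos)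
      field_simp
      rw [e, ← e2]
      ring
    set x₁ : II → ℂ := fun i => s' * ψ i + t' * φ i with hx₁
    set x₂ : II → ℂ := fun i => -(starRingEnd ℂ) t' * ψ i + (starRingEnd ℂ) s' * φ i with hx₂
    have hd2 : ∀ x y, ρ x y = x₁ x * (starRingEnd ℂ) (x₁ y) + x₂ x * (starRingEnd ℂ) (x₂ y) :=
      recombine ρ ψ φ hd s' t' hunit
    have h0 : ∀ j, x₁ (0, j) = 0 := by
      intro j
      have := hcomb j
      simp only [hx₁, hs', ht', hadef, hcdef] at *
      field_simp
      linear_combination this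
    rcases caseA_conclusion ρ hA x₁ x₂ hd2 h0 with h | ⟨γ, hγ⟩
    · refine ⟨![0,1], ![0,1], fun j => x₁ (1, j), fun j => x₂ (1, j), ?_⟩
      intro x y
      rw [hd2 x y]
      have e1 : ∀ i : II, x₁ i = (![0,1] : Fin 2 → ℂ) i.1 * x₁ (1, i.2) := by
        rintro ⟨α, j⟩
        fin_cases α
        · simp [h0 j]
        · simp
      have e2 : ∀ i : II, x₂ i = (![0,1] : Fin 2 → ℂ) i.1 * x₂ (1, i.2) := by
        rintro ⟨α, j⟩
        fin_cases α
        · simp [h j]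
        · simp
      rw [e1 x, e1 y, e2 x, e2 y]
    · refine ⟨![0,1], ![1,γ], fun j => x₁ (1, j), fun j => x₂ (0, j), ?_⟩
      intro x y
      rw [hd2 x y]
      have e1 : ∀ i : II, x₁ i = (![0,1] : Fin 2 → ℂ) i.1 * x₁ (1, i.2) := by
        rintro ⟨α, j⟩
        fin_cases α
        · simp [h0 j]
        · simp
      have e2 : ∀ i : II, x₂ i = (![1,γ] : Fin 2 → ℂ) i.1 * x₂ (0, i.2) := by
        rintro ⟨α, j⟩
        fin_cases α
        · simp
        · simp [hγ j]
      rw [e1 x, e1 y, e2 x, e2 y]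
  · -- independent case
    have hind : ∀ s t : ℂ, (∀ j, s * a j + t * c j = 0) → s = 0 ∧ t = 0 := by
      intro s t h
      by_contra hne
      exact hdep ⟨s, t, hne, h⟩
    have hdet := gram_ne_zero a c hind
    have horth : ∀ u : JJ → ℂ, cdot u a = 0 → cdot u c = 0
        → (cdot u b = 0 ∧ cdot u d = 0) := by
      intro u hua huc
      have hcross : ∀ v : JJ → ℂ,
          cdot u b * (starRingEnd ℂ) (cdot v a) + cdot u d * (starRingEnd ℂ) (cdot v c) = 0 := by
        intro v
        have hm := masterA ρ hA ψ φ hd a c b d (fun _ => rfl) (fun _ => rfl)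
          (fun _ => rfl) (fun _ => rfl) u v
        rw [hua, huc] at hm
        simp only [Complex.normSq_zero, add_zero, zero_mul] at hm
        exact Complex.normSq_eq_zero.mp (le_antisymm hm (Complex.normSq_nonneg _))
      set w : JJ → ℂ := fun j => (starRingEnd ℂ) (cdot u b) * a j
        + (starRingEnd ℂ) (cdot u d) * c j with hw
      have hvw : ∀ v : JJ → ℂ, cdot v w = 0 := by
        intro v
        have e : cdot v w = (starRingEnd ℂ) (cdot u b) * cdot v a
            + (starRingEnd ℂ) (cdot u d) * cdot v c := by
          conv_lhs => rw [show cdot v w = cdot v (fun j => (starRingEnd ℂ) (cdot u b) * a j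
            + (starRingEnd ℂ) (cdot u d) * c j) from rfl]
          rw [cdot_comb_right]
        rw [e]
        have := congrArg (starRingEnd ℂ) (hcross v)
        simp only [map_add, _root_.map_mul, Complex.conj_conj, map_zero] at this
        linear_combination this
      have hw0 := cdot_self_eq_zero (hvw w)
      have := hind ((starRingEnd ℂ) (cdot u b)) ((starRingEnd ℂ) (cdot u d))
        (fun j => by have := congrFun hw0 j; simpa [hw] using this)
      exact ⟨conj_eq_zero' this.1, conj_eq_zero' this.2⟩
    obtain ⟨t00, t01, hbspan⟩ := span_coeffs a c b hdet (fun u h1 h2 => (horth u h1 h2).1)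
    obtain ⟨t10, t11, hdspan⟩ := span_coeffs a c d hdet (fun u h1 h2 => (horth u h1 h2).2)
    have hbfun : b = fun j => t00 * a j + t01 * c j := funext hbspan
    have hdfun : d = fun j => t10 * a j + t11 * c j := funext hdspan
    have hcub : ∀ u : JJ → ℂ, cdot u b = t00 * cdot u a + t01 * cdot u c := by
      intro u; rw [hbfun, cdot_comb_right]
    have hcud : ∀ u : JJ → ℂ, cdot u d = t10 * cdot u a + t11 * cdot u c := by
      intro u; rw [hdfun, cdot_comb_right]
    -- the key norm inequality ‖T†y‖ ≤ ‖Ty‖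
    have hkey : ∀ y0 y1 : ℂ,
        Complex.normSq ((starRingEnd ℂ) t00 * y0 + (starRingEnd ℂ) t10 * y1)
          + Complex.normSq ((starRingEnd ℂ) t01 * y0 + (starRingEnd ℂ) t11 * y1)
        ≤ Complex.normSq (t00 * y0 + t01 * y1) + Complex.normSq (t10 * y0 + t11 * y1) := by
      intro y0 y1
      obtain ⟨u, hu1, hu2⟩ := exists_coords a c hdet
        ((starRingEnd ℂ) t00 * y0 + (starRingEnd ℂ) t10 * y1)
        ((starRingEnd ℂ) t01 * y0 + (starRingEnd ℂ) t11 * y1)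
      obtain ⟨v, hv1, hv2⟩ := exists_coords a c hdet y0 y1
      have hm := masterA ρ hA ψ φ hd a c b d (fun _ => rfl) (fun _ => rfl)
        (fun _ => rfl) (fun _ => rfl) u v
      rw [hcub u, hcub v, hcud u, hcud v, hu1, hu2, hv1, hv2] at hm
      have ecross : (t00 * ((starRingEnd ℂ) t00 * y0 + (starRingEnd ℂ) t10 * y1)
            + t01 * ((starRingEnd ℂ) t01 * y0 + (starRingEnd ℂ) t11 * y1))
            * (starRingEnd ℂ) y0
          + (t10 * ((starRingEnd ℂ) t00 * y0 + (starRingEnd ℂ) t10 * y1)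
            + t11 * ((starRingEnd ℂ) t01 * y0 + (starRingEnd ℂ) t11 * y1))
            * (starRingEnd ℂ) y1
          = ((Complex.normSq ((starRingEnd ℂ) t00 * y0 + (starRingEnd ℂ) t10 * y1)
            + Complex.normSq ((starRingEnd ℂ) t01 * y0 + (starRingEnd ℂ) t11 * y1) : ℝ) : ℂ) := by
        push_cast
        rw [Complex.normSq_eq_conj_mul_self, Complex.normSq_eq_conj_mul_self]
        simp only [map_add, _root_.map_mul, Complex.conj_conj]
        ring
      rw [ecross, Complex.normSq_ofReal] at hm
      set S1 := Complex.normSq ((starRingEnd ℂ) t00 * y0 + (starRingEnd ℂ) t10 * y1)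
          + Complex.normSq ((starRingEnd ℂ) t01 * y0 + (starRingEnd ℂ) t11 * y1) with hS1d
      set S2 := Complex.normSq (t00 * y0 + t01 * y1) + Complex.normSq (t10 * y0 + t11 * y1)
        with hS2d
      have hS1 : 0 ≤ S1 := add_nonneg (Complex.normSq_nonneg _) (Complex.normSq_nonneg _)
      have hS2 : 0 ≤ S2 := add_nonneg (Complex.normSq_nonneg _) (Complex.normSq_nonneg _)
      rcases eq_or_lt_of_le hS1 with h | h
      · linarith
      · exact le_of_mul_le_mul_left hm h
    have n1 : Complex.normSq t01 = Complex.normSq t10 := by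
      have h1 := hkey 1 0
      have h2 := hkey 0 1
      simp only [mul_one, mul_zero, add_zero, zero_add, Complex.normSq_conj] at h1 h2
      linarith
    -- the off-diagonal normality relation
    have hz : ∀ z : ℂ, 0 ≤ 0 + Complex.normSq z * 0
        + 2 * (z * (t00 * (starRingEnd ℂ) t01 + t10 * (starRingEnd ℂ) t11
          - ((starRingEnd ℂ) t00 * t10 + (starRingEnd ℂ) t01 * t11))).re := by
      intro z
      have h1 := hkey 1 ((starRingEnd ℂ) z)
      simp only [mul_one] at h1
      have hn1c : t10 * (starRingEnd ℂ) t10 - t01 * (starRingEnd ℂ) t01 = 0 := by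
        rw [Complex.mul_conj, Complex.mul_conj]
        norm_cast
        linarith [n1]
      have ecomplex : ((t00 + t01 * (starRingEnd ℂ) z)
            * (starRingEnd ℂ) (t00 + t01 * (starRingEnd ℂ) z)
          + (t10 + t11 * (starRingEnd ℂ) z)
            * (starRingEnd ℂ) (t10 + t11 * (starRingEnd ℂ) z))
          - (((starRingEnd ℂ) t00 + (starRingEnd ℂ) t10 * (starRingEnd ℂ) z)
            * (starRingEnd ℂ) ((starRingEnd ℂ) t00 + (starRingEnd ℂ) t10 * (starRingEnd ℂ) z)
          + ((starRingEnd ℂ) t01 + (starRingEnd ℂ) t11 * (starRingEnd ℂ) z)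
            * (starRingEnd ℂ) ((starRingEnd ℂ) t01 + (starRingEnd ℂ) t11 * (starRingEnd ℂ) z))
          - ((z * (t00 * (starRingEnd ℂ) t01 + t10 * (starRingEnd ℂ) t11
              - ((starRingEnd ℂ) t00 * t10 + (starRingEnd ℂ) t01 * t11)))
            + (starRingEnd ℂ) (z * (t00 * (starRingEnd ℂ) t01 + t10 * (starRingEnd ℂ) t11
              - ((starRingEnd ℂ) t00 * t10 + (starRingEnd ℂ) t01 * t11))))
          = (1 - z * (starRingEnd ℂ) z)
            * (t10 * (starRingEnd ℂ) t10 - t01 * (starRingEnd ℂ) t01) := by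
        simp only [map_add, map_sub, _root_.map_mul, Complex.conj_conj]
        ring
      rw [hn1c, mul_zero] at ecomplex
      rw [Complex.mul_conj, Complex.mul_conj, Complex.mul_conj, Complex.mul_conj] at ecomplex
      have hre := congrArg Complex.re ecomplex
      simp only [Complex.sub_re, Complex.add_re, Complex.ofReal_re, Complex.conj_re,
        Complex.zero_re] at hre
      linarith [h1, hre]
    have hwp := quad_aux (le_refl (0:ℝ)) (le_refl (0:ℝ)) hz
    rw [mul_zero] at hwp
    have hwp0 : t00 * (starRingEnd ℂ) t01 + t10 * (starRingEnd ℂ) t11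
        - ((starRingEnd ℂ) t00 * t10 + (starRingEnd ℂ) t01 * t11) = 0 :=
      Complex.normSq_eq_zero.mp (le_antisymm hwp (Complex.normSq_nonneg _))
    have h01S : t00 * (starRingEnd ℂ) t01 + t10 * (starRingEnd ℂ) t11
        = (starRingEnd ℂ) t00 * t10 + (starRingEnd ℂ) t01 * t11 := by
      linear_combination hwp0
    have h00S : t10 * (starRingEnd ℂ) t10 = (starRingEnd ℂ) t01 * t01 := by
      rw [Complex.mul_conj, mul_comm ((starRingEnd ℂ) t01) t01, Complex.mul_conj]
      norm_cast
      linarith [n1]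
    obtain ⟨W0, W1, κ1, κ2, hu, he1, he2, he3, he4⟩ := normal2 t00 t10 t01 t11 h00S h01S
    have hd2 := recombine ρ ψ φ hd W0 W1 hu
    refine ⟨![1, κ1], ![1, κ2], fun j => W0 * ψ (0, j) + W1 * φ (0, j),
      fun j => -(starRingEnd ℂ) W1 * ψ (0, j) + (starRingEnd ℂ) W0 * φ (0, j), ?_⟩
    intro x y
    rw [hd2 x y]
    have e1 : ∀ i : II, W0 * ψ i + W1 * φ i
        = (![1, κ1] : Fin 2 → ℂ) i.1 * (W0 * ψ (0, i.2) + W1 * φ (0, i.2)) := by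
      rintro ⟨α, j⟩
      fin_cases α
      · simp
      · have hbj : ψ (1, j) = t00 * ψ (0, j) + t01 * φ (0, j) := hbspan j
        have hdj : φ (1, j) = t10 * ψ (0, j) + t11 * φ (0, j) := hdspan j
        show W0 * ψ (1, j) + W1 * φ (1, j)
          = (![1, κ1] : Fin 2 → ℂ) 1 * (W0 * ψ (0, j) + W1 * φ (0, j))
        simp only [Matrix.cons_val_one, Matrix.head_cons, Matrix.cons_val_zero]
        linear_combination W0 * hbj + W1 * hdj + ψ (0, j) * he1 + φ (0, j) * he2
    have e2 : ∀ i : II, -(starRingEnd ℂ) W1 * ψ i + (starRingEnd ℂ) W0 * φ i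
        = (![1, κ2] : Fin 2 → ℂ) i.1
          * (-(starRingEnd ℂ) W1 * ψ (0, i.2) + (starRingEnd ℂ) W0 * φ (0, i.2)) := by
      rintro ⟨α, j⟩
      fin_cases α
      · simp
      · have hbj : ψ (1, j) = t00 * ψ (0, j) + t01 * φ (0, j) := hbspan j
        have hdj : φ (1, j) = t10 * ψ (0, j) + t11 * φ (0, j) := hdspan j
        show -(starRingEnd ℂ) W1 * ψ (1, j) + (starRingEnd ℂ) W0 * φ (1, j)
          = (![1, κ2] : Fin 2 → ℂ) 1
            * (-(starRingEnd ℂ) W1 * ψ (0, j) + (starRingEnd ℂ) W0 * φ (0, j))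
        simp only [Matrix.cons_val_one, Matrix.head_cons, Matrix.cons_val_zero]
        linear_combination (-(starRingEnd ℂ) W1) * hbj + (starRingEnd ℂ) W0 * hdj
          + ψ (0, j) * he3 + φ (0, j) * he4
    rw [e1 x, e1 y, e2 x, e2 y]

def Qform (h z : JJ → ℂ) : ℂ :=
  ∑ j : JJ, ∑ k : JJ, (starRingEnd ℂ) (z j) * h (k.1, j.2) * (starRingEnd ℂ) (h (j.1, k.2)) * z k

lemma Qform_expand (h z : JJ → ℂ) : Qform h z =
    ∑ j : JJ, ((starRingEnd ℂ) (z j) * h (((0:Fin 2),j.2)) * (starRingEnd ℂ) (h (j.1, 0)) * z (0,0)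
      + (starRingEnd ℂ) (z j) * h ((0:Fin 2),j.2) * (starRingEnd ℂ) (h (j.1, 1)) * z (0,1)
      + (starRingEnd ℂ) (z j) * h ((1:Fin 2),j.2) * (starRingEnd ℂ) (h (j.1, 0)) * z (1,0)
      + (starRingEnd ℂ) (z j) * h ((1:Fin 2),j.2) * (starRingEnd ℂ) (h (j.1, 1)) * z (1,1)) := by
  rw [Qform]
  congr 1; funext j
  rw [sumJJ]

lemma cdot2_expand (p q : Fin 2 → ℂ) :
    cdot p q = (starRingEnd ℂ) (p 0) * q 0 + (starRingEnd ℂ) (p 1) * q 1 := by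
  rw [cdot, Fin.sum_univ_two]

/-- the quadratic form of `ptB ρ` at a product test vector. -/
lemma ptB_form (ρ : Matrix II II ℂ) (e₁ e₂ : Fin 2 → ℂ) (h₁ h₂ : JJ → ℂ)
    (hρ : ∀ x y : II, ρ x y = (e₁ x.1 * h₁ x.2) * (starRingEnd ℂ) (e₁ y.1 * h₁ y.2)
      + (e₂ x.1 * h₂ x.2) * (starRingEnd ℂ) (e₂ y.1 * h₂ y.2))
    (u : Fin 2 → ℂ) (z : JJ → ℂ) :
    star (fun i : II => u i.1 * z i.2) ⬝ᵥ (ptB ρ *ᵥ (fun i : II => u i.1 * z i.2)) =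
      (cdot u e₁ * (starRingEnd ℂ) (cdot u e₁)) * Qform h₁ z
      + (cdot u e₂ * (starRingEnd ℂ) (cdot u e₂)) * Qform h₂ z := by
  rw [dotProduct, sumII]
  simp only [mulVec, dotProduct, Pi.star_apply, RCLike.star_def, sumII, sumJJ, ptB, hρ,
    Qform_expand, cdot2_expand, map_add, _root_.map_mul, Complex.conj_conj]
  ring

/-- evaluation of `Qform` at the explicit entanglement witness. -/
lemma Qform_witness (h : JJ → ℂ) :
    Qform h (fun j => (![![-h (1,0), -h (1,1)], ![h (0,0), h (0,1)]] j.1 j.2)) =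
      (-2 : ℂ) * ((h (0,0) * h (1,1) - h (0,1) * h (1,0))
        * (starRingEnd ℂ) (h (0,0) * h (1,1) - h (0,1) * h (1,0))) := by
  rw [Qform_expand, sumJJ]
  simp only [Matrix.cons_val_zero, Matrix.cons_val_one, Matrix.head_cons, map_sub,
    _root_.map_mul, map_neg, Prod.mk_zero_zero, Prod.mk_one_one]
  ring

/-- killing the determinant of the first local pure state. -/
lemma ptB_kill1 (ρ : Matrix II II ℂ) (hB : (ptB ρ).PosSemidef)
    (e₁ e₂ : Fin 2 → ℂ) (h₁ h₂ : JJ → ℂ)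
    (hρ : ∀ x y : II, ρ x y = (e₁ x.1 * h₁ x.2) * (starRingEnd ℂ) (e₁ y.1 * h₁ y.2)
      + (e₂ x.1 * h₂ x.2) * (starRingEnd ℂ) (e₂ y.1 * h₂ y.2))
    (hD : e₁ 0 * e₂ 1 - e₁ 1 * e₂ 0 ≠ 0) :
    h₁ (0,0) * h₁ (1,1) - h₁ (0,1) * h₁ (1,0) = 0 := by
  by_contra hne
  set u : Fin 2 → ℂ := ![-(starRingEnd ℂ) (e₂ 1), (starRingEnd ℂ) (e₂ 0)] with hu
  set z : JJ → ℂ := fun j => (![![-h₁ (1,0), -h₁ (1,1)], ![h₁ (0,0), h₁ (0,1)]] j.1 j.2) with hz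
  have hue2 : cdot u e₂ = 0 := by
    rw [cdot2_expand, hu]
    simp only [Matrix.cons_val_zero, Matrix.cons_val_one, Matrix.head_cons, map_neg,
      Complex.conj_conj]
    ring
  have hue1 : cdot u e₁ = -(e₁ 0 * e₂ 1 - e₁ 1 * e₂ 0) := by
    rw [cdot2_expand, hu]
    simp only [Matrix.cons_val_zero, Matrix.cons_val_one, Matrix.head_cons, map_neg,
      Complex.conj_conj]
    ring
  have hpsd := hB.dotProduct_mulVec_nonneg (fun i : II => u i.1 * z i.2)
  rw [ptB_form ρ e₁ e₂ h₁ h₂ hρ u z] at hpsd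
  rw [hue1, hue2, Qform_witness h₁] at hpsd
  rw [Complex.mul_conj, Complex.mul_conj] at hpsd
  simp only [mul_zero, zero_mul, add_zero] at hpsd
  have hre := (Complex.le_def.mp hpsd).1
  have e1 : ((Complex.normSq (-(e₁ 0 * e₂ 1 - e₁ 1 * e₂ 0)) : ℝ) : ℂ)
      * ((-2 : ℂ) * ((Complex.normSq (h₁ (0,0) * h₁ (1,1) - h₁ (0,1) * h₁ (1,0)) : ℝ) : ℂ))
      = (((-2 : ℝ) * Complex.normSq (-(e₁ 0 * e₂ 1 - e₁ 1 * e₂ 0))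
        * Complex.normSq (h₁ (0,0) * h₁ (1,1) - h₁ (0,1) * h₁ (1,0)) : ℝ) : ℂ) := by
    push_cast
    ring
  rw [e1] at hre
  rw [Complex.zero_re, Complex.ofReal_re] at hre
  have hp1 : 0 < Complex.normSq (-(e₁ 0 * e₂ 1 - e₁ 1 * e₂ 0)) :=
    Complex.normSq_pos.mpr (neg_ne_zero.mpr hD)
  have hp2 : 0 < Complex.normSq (h₁ (0,0) * h₁ (1,1) - h₁ (0,1) * h₁ (1,0)) :=
    Complex.normSq_pos.mpr hne
  nlinarith [hp1, hp2, hre]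

/-- a 2×2 matrix with vanishing determinant factorizes. -/
lemma rank1_factor (h : JJ → ℂ) (hdet : h (0,0) * h (1,1) - h (0,1) * h (1,0) = 0) :
    ∃ f g : Fin 2 → ℂ, ∀ j : JJ, h j = f j.1 * g j.2 := by
  have hdet' : h 0 * h 1 - h (0,1) * h (1,0) = 0 := by
    simpa only [Prod.mk_zero_zero, Prod.mk_one_one] using hdet
  by_cases h00 : h (0,0) ≠ 0
  · have h00' : h 0 ≠ 0 := by simpa only [Prod.mk_zero_zero] using h00
    refine ⟨![h (0,0), h (1,0)], ![1, h (0,1) / h (0,0)], ?_⟩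
    rintro ⟨β, γ⟩
    fin_cases β <;> fin_cases γ <;>
      simp only [Matrix.cons_val_zero, Matrix.cons_val_one, Matrix.head_cons,
        Prod.mk_zero_zero, Prod.mk_one_one, Fin.zero_eta, Fin.mk_one] <;>
      field_simp <;>
      try linear_combination hdet'
  · push_neg at h00
    have h00' : h 0 = 0 := by simpa only [Prod.mk_zero_zero] using h00
    by_cases h01 : h (0,1) ≠ 0
    · refine ⟨![h (0,1), h (1,1)], ![h (0,0) / h (0,1), 1], ?_⟩
      rintro ⟨β, γ⟩
      fin_cases β <;> fin_cases γ <;>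
        simp only [Matrix.cons_val_zero, Matrix.cons_val_one, Matrix.head_cons,
          Prod.mk_zero_zero, Prod.mk_one_one, Fin.zero_eta, Fin.mk_one] <;>
        field_simp <;>
        try linear_combination -hdet'
    · push_neg at h01
      refine ⟨![0, 1], ![h (1,0), h (1,1)], ?_⟩
      rintro ⟨β, γ⟩
      fin_cases β <;> fin_cases γ <;>
        simp only [Matrix.cons_val_zero, Matrix.cons_val_one, Matrix.head_cons,
          Prod.mk_zero_zero, Prod.mk_one_one, Fin.zero_eta, Fin.mk_one] <;>
        simp [h00', h01, h00]

/-- rank-two positive semidefinite matrices decompose into two outer products. -/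
lemma exists_two_decomp (ρ : Matrix II II ℂ) (hpos : ρ.PosSemidef) (hrank : ρ.rank = 2) :
    ∃ ψ φ : II → ℂ, ∀ x y, ρ x y = ψ x * (starRingEnd ℂ) (ψ y)
      + φ x * (starRingEnd ℂ) (φ y) := by
  classical
  have hH := hpos.1
  set U : Matrix II II ℂ := (Matrix.IsHermitian.eigenvectorUnitary hH : Matrix II II ℂ)
    with hU
  have hent : ∀ x y, ρ x y
      = ∑ j, ((hH.eigenvalues j : ℝ) : ℂ) * (U x j * (starRingEnd ℂ) (U y j)) := by
    intro x y
    conv_lhs => rw [hH.spectral_theorem, Unitary.conjStarAlgAut_apply]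
    rw [Matrix.mul_apply]
    refine Finset.sum_congr rfl fun j _ => ?_
    rw [Matrix.mul_diagonal]
    simp only [Matrix.star_apply, RCLike.star_def, Function.comp_apply, RCLike.ofReal_alg,
      Complex.real_smul, mul_one]
    ring
  have hcard : Fintype.card {i // hH.eigenvalues i ≠ 0} = 2 := by
    rw [← Matrix.IsHermitian.rank_eq_card_non_zero_eigs hH]
    exact hrank
  have hcard' : Nat.card {i // hH.eigenvalues i ≠ 0} = 2 := by
    rw [Nat.card_eq_fintype_card]; exact hcard
  obtain ⟨i₁, i₂, hne, huniv⟩ := Nat.card_eq_two_iff.mp hcard'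
  have hall : ∀ j : II, hH.eigenvalues j ≠ 0 → j = (i₁ : II) ∨ j = (i₂ : II) := by
    intro j hj
    have hmem : (⟨j, hj⟩ : {i // hH.eigenvalues i ≠ 0}) ∈ (Set.univ : Set _) := trivial
    rw [← huniv] at hmem
    rcases hmem with h | h
    · exact Or.inl (congrArg Subtype.val h)
    · exact Or.inr (congrArg Subtype.val h)
  have hvalne : (i₁ : II) ≠ (i₂ : II) := fun h => hne (Subtype.coe_injective h)
  refine ⟨fun x => ((Real.sqrt (hH.eigenvalues i₁) : ℝ) : ℂ) * U x i₁,
          fun x => ((Real.sqrt (hH.eigenvalues i₂) : ℝ) : ℂ) * U x i₂, fun x y => ?_⟩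
  rw [hent x y]
  have hzero : ∀ j ∈ (Finset.univ : Finset II), j ∉ ({(i₁ : II), (i₂ : II)} : Finset II) →
      ((hH.eigenvalues j : ℝ) : ℂ) * (U x j * (starRingEnd ℂ) (U y j)) = 0 := by
    intro j _ hj
    have : hH.eigenvalues j = 0 := by
      by_contra hc
      rcases hall j hc with h | h <;> simp [h] at hj
    rw [this]
    simp
  rw [← Finset.sum_subset (Finset.subset_univ ({(i₁ : II), (i₂ : II)} : Finset II)) hzero]
  rw [Finset.sum_insert (by simp [hvalne]), Finset.sum_singleton]
  have sq1 : ((Real.sqrt (hH.eigenvalues i₁) : ℝ) : ℂ)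
      * ((Real.sqrt (hH.eigenvalues i₁) : ℝ) : ℂ) = ((hH.eigenvalues i₁ : ℝ) : ℂ) := by
    rw [← Complex.ofReal_mul, Real.mul_self_sqrt (hpos.eigenvalues_nonneg i₁)]
  have sq2 : ((Real.sqrt (hH.eigenvalues i₂) : ℝ) : ℂ)
      * ((Real.sqrt (hH.eigenvalues i₂) : ℝ) : ℂ) = ((hH.eigenvalues i₂ : ℝ) : ℂ) := by
    rw [← Complex.ofReal_mul, Real.mul_self_sqrt (hpos.eigenvalues_nonneg i₂)]
  simp only [_root_.map_mul, Complex.conj_ofReal]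
  linear_combination (-(U x (i₁ : II) * (starRingEnd ℂ) (U y (i₁ : II)))) * sq1
    - (U x (i₂ : II) * (starRingEnd ℂ) (U y (i₂ : II))) * sq2

lemma rank_two_det_ne_zero (M : Matrix (Fin 2) (Fin 2) ℂ) (h : M.rank = 2) : M.det ≠ 0 := by
  intro hdet
  obtain ⟨v, hvne, hv⟩ := Matrix.exists_mulVec_eq_zero_iff.mpr hdet
  have hker : v ∈ LinearMap.ker M.mulVecLin := by
    simpa [Matrix.mulVecLin_apply] using hv
  have hrn := LinearMap.finrank_range_add_finrank_ker M.mulVecLin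
  have hdom : Module.finrank ℂ (Fin 2 → ℂ) = 2 := Module.finrank_fin_fun ℂ
  have hkpos : 0 < Module.finrank ℂ (LinearMap.ker M.mulVecLin) := by
    rw [Module.finrank_pos_iff]
    exact ⟨⟨v, hker⟩, 0, fun hc => hvne (by simpa using congrArg Subtype.val hc)⟩
  unfold Matrix.rank at h
  omega
lemma det_redA_eq (ρ : Matrix II II ℂ) (e₁ e₂ : Fin 2 → ℂ) (h₁ h₂ : JJ → ℂ)
    (hρ : ∀ x y : II, ρ x y = (e₁ x.1 * h₁ x.2) * (starRingEnd ℂ) (e₁ y.1 * h₁ y.2)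
      + (e₂ x.1 * h₂ x.2) * (starRingEnd ℂ) (e₂ y.1 * h₂ y.2)) :
    (redA ρ).det = cdot h₁ h₁ * cdot h₂ h₂
      * ((e₁ 0 * e₂ 1 - e₁ 1 * e₂ 0)
        * (starRingEnd ℂ) (e₁ 0 * e₂ 1 - e₁ 1 * e₂ 0)) := by
  have hentry : ∀ α α' : Fin 2, redA ρ α α'
      = e₁ α * (starRingEnd ℂ) (e₁ α') * cdot h₁ h₁
        + e₂ α * (starRingEnd ℂ) (e₂ α') * cdot h₂ h₂ := by
    intro α α'
    show ∑ b : Fin 2, ∑ c : Fin 2, ρ (α, b, c) (α', b, c) = _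
    simp only [hρ, cdot, Fintype.sum_prod_type, Fin.sum_univ_two, _root_.map_mul]
    ring
  rw [Matrix.det_fin_two, hentry, hentry, hentry, hentry]
  simp only [map_sub, _root_.map_mul]
  ring


end PRTS

set_option maxHeartbeats 2000000 in
/-- Any PPT state supported on `ℂ²⊗ℂ²⊗ℂ²` of rank 2 is separable. -/
theorem ppt_rank_two_separable
    (ρ : Matrix (Fin 2 × Fin 2 × Fin 2) (Fin 2 × Fin 2 × Fin 2) ℂ)
    (hpos : ρ.PosSemidef) (hppt : IsPPT ρ)
    (hsupp : SupportedOn ρ) (hrank : ρ.rank = 2) :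
    SeparableState ρ := by
  obtain ⟨ψ, φ, hd⟩ := PRTS.exists_two_decomp ρ hpos hrank
  obtain ⟨e₁, e₂, h₁, h₂, hρ2⟩ := PRTS.coreA ρ hppt.1 ψ φ hd
  have hdetA := PRTS.rank_two_det_ne_zero _ hsupp.1
  have hD : e₁ 0 * e₂ 1 - e₁ 1 * e₂ 0 ≠ 0 := by
    intro h
    apply hdetA
    rw [PRTS.det_redA_eq ρ e₁ e₂ h₁ h₂ hρ2, h]
    simp
  have hρ2' : ∀ x y : Fin 2 × Fin 2 × Fin 2,
      ρ x y = (e₂ x.1 * h₂ x.2) * (starRingEnd ℂ) (e₂ y.1 * h₂ y.2)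
        + (e₁ x.1 * h₁ x.2) * (starRingEnd ℂ) (e₁ y.1 * h₁ y.2) := fun x y => by
    rw [hρ2 x y]; ring
  have hD' : e₂ 0 * e₁ 1 - e₂ 1 * e₁ 0 ≠ 0 := fun h => hD (by linear_combination -h)
  have hk1 := PRTS.ptB_kill1 ρ hppt.2.1 e₁ e₂ h₁ h₂ hρ2 hD
  have hk2 := PRTS.ptB_kill1 ρ hppt.2.1 e₂ e₁ h₂ h₁ hρ2' hD'
  obtain ⟨f₁, g₁, hf1⟩ := PRTS.rank1_factor h₁ hk1
  obtain ⟨f₂, g₂, hf2⟩ := PRTS.rank1_factor h₂ hk2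
  refine ⟨2, fun _ => 1, ![e₁, e₂], ![f₁, f₂], ![g₁, g₂], fun _ => zero_le_one, ?_⟩
  funext x y
  rw [Fin.sum_univ_two]
  simp only [Matrix.cons_val_zero, Matrix.cons_val_one, Matrix.head_cons,
    Complex.ofReal_one, one_smul, Matrix.add_apply]
  rw [hρ2 x y, hf1 x.2, hf1 y.2, hf2 x.2, hf2 y.2]
  simp only [outer, prodVec, Matrix.vecMulVec_apply, Pi.star_apply, RCLike.star_def,
    _root_.map_mul]
  ring

end
end

section
/- Let ρ be a PPT state on ℂ²⊗ℂ²⊗ℂ² with rank(ρ) = 3. Then there exist nonzero vectors e, f, g ∈ ℂ² such that ρ (e⊗f⊗g) = 0, i.e., the product vector e⊗f⊗g lies in the kernel of ρ. -/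
open Matrix BigOperators ComplexOrder

noncomputable section

namespace PPTAux

/-! Auxiliary machinery: a `3 × 4` matrix over a commutative ring, with columns indexed by
`Fin 2 × Fin 2`, its vector of signed `3 × 3` minors (`mvec`), and the `2 × 2` determinant
quadric `quad` on `Fin 2 × Fin 2 → R`. -/

def det3 {R : Type*} [CommRing R] (u v w : Fin 3 → R) : R :=
  u 0 * (v 1 * w 2 - v 2 * w 1) - v 0 * (u 1 * w 2 - u 2 * w 1) + w 0 * (u 1 * v 2 - u 2 * v 1)

def colQ {R : Type*} [CommRing R] (M : Matrix (Fin 3) (Fin 2 × Fin 2) R) (p : Fin 2 × Fin 2) :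
    Fin 3 → R := fun i => M i p

def mvec {R : Type*} [CommRing R] (M : Matrix (Fin 3) (Fin 2 × Fin 2) R) : Fin 2 × Fin 2 → R :=
  fun p =>
    (![![det3 (colQ M (0,1)) (colQ M (1,0)) (colQ M (1,1)),
        -det3 (colQ M (0,0)) (colQ M (1,0)) (colQ M (1,1))],
      ![det3 (colQ M (0,0)) (colQ M (0,1)) (colQ M (1,1)),
        -det3 (colQ M (0,0)) (colQ M (0,1)) (colQ M (1,0))]] : Fin 2 → Fin 2 → R) p.1 p.2

def quad {R : Type*} [CommRing R] (h : Fin 2 × Fin 2 → R) : R :=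
  h (0,0) * h (1,1) - h (0,1) * h (1,0)

/-- Laplace expansion along a repeated row: the minor vector is in the kernel. -/
lemma mulVec_mvec {R : Type*} [CommRing R] (M : Matrix (Fin 3) (Fin 2 × Fin 2) R) :
    M.mulVec (mvec M) = 0 := by
  funext i
  fin_cases i <;>
    (simp [mulVec, dotProduct, Fintype.sum_prod_type, Fin.sum_univ_two, mvec, det3, colQ]; ring)

/-- Ring homomorphisms commute with `quad ∘ mvec`. -/
lemma map_quad_mvec {R S : Type*} [CommRing R] [CommRing S] (φ : R →+* S)
    (N : Matrix (Fin 3) (Fin 2 × Fin 2) R) :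
    φ (quad (mvec N)) = quad (mvec (Matrix.of fun i p => φ (N i p))) := by
  simp [quad, mvec, det3, colQ]

/-- `quad ∘ mvec` is homogeneous of degree 6. -/
lemma quad_mvec_smul {R : Type*} [CommRing R] (s : R) (M : Matrix (Fin 3) (Fin 2 × Fin 2) R) :
    quad (mvec (s • M)) = s ^ 6 * quad (mvec M) := by
  simp only [quad, mvec, det3, colQ, Matrix.smul_apply, smul_eq_mul,
    Matrix.cons_val', Matrix.cons_val_zero, Matrix.cons_val_one, Matrix.head_cons,
    Matrix.empty_val', Matrix.cons_val_fin_one, Matrix.head_fin_const]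
  ring

lemma pair_cases (p : Fin 2 × Fin 2) : p = (0,0) ∨ p = (0,1) ∨ p = (1,0) ∨ p = (1,1) := by
  obtain ⟨a, b⟩ := p
  fin_cases a <;> fin_cases b <;> simp [Prod.ext_iff, -Prod.mk_zero_zero, -Prod.mk_one_one]

/-- A nonzero `2 × 2` "matrix" with vanishing determinant is a (tensor) product. -/
lemma prod_of_quad (h : Fin 2 × Fin 2 → ℂ) (hne : h ≠ 0) (hq : quad h = 0) :
    ∃ f g : Fin 2 → ℂ, f ≠ 0 ∧ g ≠ 0 ∧ ∀ p, h p = f p.1 * g p.2 := by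
  unfold quad at hq
  by_cases hrow : h (0,0) = 0 ∧ h (0,1) = 0
  · refine ⟨![0,1], fun c => h (1,c), ?_, ?_, ?_⟩
    · intro hf; have := congrFun hf 1; simp at this
    · intro hg
      apply hne; funext p
      have hg0 : h (1,0) = 0 := congrFun hg 0
      have hg1 : h (1,1) = 0 := congrFun hg 1
      rcases pair_cases p with rfl|rfl|rfl|rfl <;>
        simp only [hrow.1, hrow.2, hg0, hg1, Pi.zero_apply]
    · intro p
      rcases pair_cases p with rfl|rfl|rfl|rfl
      · show h (0,0) = ![(0:ℂ),1] 0 * h (1,0); rw [hrow.1]; simp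
      · show h (0,1) = ![(0:ℂ),1] 0 * h (1,1); rw [hrow.2]; simp
      · show h (1,0) = ![(0:ℂ),1] 1 * h (1,0); simp
      · show h (1,1) = ![(0:ℂ),1] 1 * h (1,1); simp
  · push_neg at hrow
    by_cases h00 : h (0,0) = 0
    · have h01 : h (0,1) ≠ 0 := hrow h00
      have h10 : h (1,0) = 0 := by
        have : h (0,1) * h (1,0) = 0 := by linear_combination h (1,1) * h00 - hq
        exact (mul_eq_zero.mp this).resolve_left h01
      set t := h (1,1) / h (0,1) with htdef
      refine ⟨![1, t], fun c => h (0,c), ?_, ?_, ?_⟩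
      · intro hf; have := congrFun hf 0; simp at this
      · intro hg; exact h01 (congrFun hg 1)
      · intro p
        rcases pair_cases p with rfl|rfl|rfl|rfl
        · show h (0,0) = ![(1:ℂ), t] 0 * h (0,0); simp
        · show h (0,1) = ![(1:ℂ), t] 0 * h (0,1); simp
        · show h (1,0) = ![(1:ℂ), t] 1 * h (0,0); rw [h10, h00]; simp
        · show h (1,1) = ![(1:ℂ), t] 1 * h (0,1)
          simp only [Matrix.cons_val_one, Matrix.head_cons, htdef]
          exact (div_mul_cancel₀ _ h01).symm
    · set t := h (1,0) / h (0,0) with htdef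
      refine ⟨![1, t], fun c => h (0,c), ?_, ?_, ?_⟩
      · intro hf; have := congrFun hf 0; simp at this
      · intro hg; exact h00 (congrFun hg 0)
      · intro p
        rcases pair_cases p with rfl|rfl|rfl|rfl
        · show h (0,0) = ![(1:ℂ), t] 0 * h (0,0); simp
        · show h (0,1) = ![(1:ℂ), t] 0 * h (0,1); simp
        · show h (1,0) = ![(1:ℂ), t] 1 * h (0,0)
          simp only [Matrix.cons_val_one, Matrix.head_cons, htdef]
          exact (div_mul_cancel₀ _ h00).symm
        · show h (1,1) = ![(1:ℂ), t] 1 * h (0,1)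
          simp only [Matrix.cons_val_one, Matrix.head_cons, htdef]
          rw [Matrix.cons_val_zero, div_mul_eq_mul_div, eq_div_iff h00]
          linear_combination hq

/-- A two-dimensional space of `2 × 2` matrices contains a nonzero singular element. -/
lemma exists_quad_zero_of_indep (M : Matrix (Fin 3) (Fin 2 × Fin 2) ℂ)
    (v : Fin 2 → (Fin 2 × Fin 2 → ℂ)) (hind : LinearIndependent ℂ v)
    (hv : ∀ j, M.mulVec (v j) = 0) :
    ∃ h : Fin 2 × Fin 2 → ℂ, h ≠ 0 ∧ quad h = 0 ∧ M.mulVec h = 0 := by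
  by_cases hq1 : quad (v 1) = 0
  · exact ⟨v 1, hind.ne_zero 1, hq1, hv 1⟩
  · set a := quad (v 1) with ha
    set b := v 0 (0,0) * v 1 (1,1) + v 1 (0,0) * v 0 (1,1)
      - v 0 (0,1) * v 1 (1,0) - v 1 (0,1) * v 0 (1,0) with hb
    set c := quad (v 0) with hc
    obtain ⟨t, ht⟩ : ∃ t : ℂ, a * t ^ 2 + b * t + c = 0 := by
      have hdeg : (Polynomial.C a * Polynomial.X ^ 2 + Polynomial.C b * Polynomial.X
          + Polynomial.C c).degree = 2 := Polynomial.degree_quadratic hq1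
      obtain ⟨t, ht⟩ := Complex.exists_root (f := Polynomial.C a * Polynomial.X ^ 2
        + Polynomial.C b * Polynomial.X + Polynomial.C c) (by rw [hdeg]; norm_num)
      refine ⟨t, ?_⟩
      simpa [Polynomial.IsRoot] using ht
    refine ⟨v 0 + t • v 1, ?_, ?_, ?_⟩
    · intro h0
      have h1 : (1 : ℂ) • v 0 + t • v 1 = 0 := by simpa using h0
      have := Fintype.linearIndependent_iff.mp hind ![1, t] (by
        simpa [Fin.sum_univ_two] using h1) 0
      simp at this
    · simp only [quad, Pi.add_apply, Pi.smul_apply, smul_eq_mul]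
      unfold quad at ha hc
      linear_combination ht - t^2 * ha - t * hb - hc
    · rw [Matrix.mulVec_add, Matrix.mulVec_smul, hv 0, hv 1, smul_zero, add_zero]

lemma det3_ne_zero_of_indep (u v w : Fin 3 → ℂ) (hind : LinearIndependent ℂ ![u, v, w]) :
    det3 u v w ≠ 0 := by
  intro hdet
  have hdet' : (Matrix.of ![u, v, w]).det = 0 := by
    rw [Matrix.det_fin_three]
    simp only [Matrix.of_apply, Matrix.cons_val', Matrix.cons_val_zero, Matrix.cons_val_one,
      Matrix.head_cons, Matrix.empty_val', Matrix.cons_val_fin_one, Matrix.head_fin_const,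
      Matrix.cons_val_two, Matrix.tail_cons]
    unfold det3 at hdet
    linear_combination hdet
  obtain ⟨c, hc0, hc⟩ := Matrix.exists_vecMul_eq_zero_iff.mpr hdet'
  have := Fintype.linearIndependent_iff.mp hind c ?_
  · exact hc0 (funext this)
  · funext j
    have := congrFun hc j
    simpa [Matrix.vecMul, dotProduct, Fin.sum_univ_three] using this

set_option maxHeartbeats 3000000 in
/-- If all four maximal minors vanish, then all column triples are degenerate. -/
lemma triple_dets_zero (M : Matrix (Fin 3) (Fin 2 × Fin 2) ℂ) (hm : mvec M = 0) :
    ∀ p q r : Fin 2 × Fin 2, det3 (colQ M p) (colQ M q) (colQ M r) = 0 := by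
  have h0 : det3 (colQ M (0,1)) (colQ M (1,0)) (colQ M (1,1)) = 0 := congrFun hm (0,0)
  have h1 : det3 (colQ M (0,0)) (colQ M (1,0)) (colQ M (1,1)) = 0 := by
    have := congrFun hm (0,1); simpa [mvec, neg_eq_zero] using this
  have h2 : det3 (colQ M (0,0)) (colQ M (0,1)) (colQ M (1,1)) = 0 := congrFun hm (1,0)
  have h3 : det3 (colQ M (0,0)) (colQ M (0,1)) (colQ M (1,0)) = 0 := by
    have := congrFun hm (1,1); simpa [mvec, neg_eq_zero] using this
  simp only [det3, colQ] at h0 h1 h2 h3 ⊢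
  intro p q r
  rcases pair_cases p with rfl|rfl|rfl|rfl <;>
  rcases pair_cases q with rfl|rfl|rfl|rfl <;>
  rcases pair_cases r with rfl|rfl|rfl|rfl <;>
  first
    | ring1
    | linear_combination h0 | linear_combination -h0
    | linear_combination h1 | linear_combination -h1
    | linear_combination h2 | linear_combination -h2
    | linear_combination h3 | linear_combination -h3

/-- Degenerate case: when all maximal minors vanish, the kernel is at least 2-dimensional. -/
lemma indep_kernel_of_triples (M : Matrix (Fin 3) (Fin 2 × Fin 2) ℂ)
    (htr : ∀ p q r : Fin 2 × Fin 2, det3 (colQ M p) (colQ M q) (colQ M r) = 0) :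
    ∃ v : Fin 2 → (Fin 2 × Fin 2 → ℂ), LinearIndependent ℂ v ∧ ∀ j, M.mulVec (v j) = 0 := by
  have hrank : M.rank ≤ 2 := by
    by_contra hr
    push_neg at hr
    have hr3 : M.rank = 3 := le_antisymm (by simpa using M.rank_le_card_height) hr
    rw [Matrix.rank_eq_finrank_span_cols] at hr3
    obtain ⟨s, hs_sub, hs_span, hs_ind⟩ := exists_linearIndependent ℂ (Set.range Mᵀ)
    have hfin : s.Finite := (Set.finite_range Mᵀ).subset hs_sub
    have hsp3 : Module.finrank ℂ (Submodule.span ℂ s) = 3 := by rw [hs_span]; exact hr3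
    haveI hFT : Fintype s := hfin.fintype
    have hle := finrank_span_le_card (R := ℂ) (s := s)
    rw [hsp3] at hle
    obtain ⟨x, y, z, hx, hy, hz, hxy, hxz, hyz⟩ :=
      (Finset.two_lt_card_iff (s := s.toFinset)).mp (by omega)
    rw [Set.mem_toFinset] at hx hy hz
    obtain ⟨p, hp⟩ := hs_sub hx
    obtain ⟨q, hq⟩ := hs_sub hy
    obtain ⟨r, hr'⟩ := hs_sub hz
    have hind3 : LinearIndependent ℂ ![x, y, z] := by
      have ginj : Function.Injective (![⟨x, hx⟩, ⟨y, hy⟩, ⟨z, hz⟩] : Fin 3 → s) := by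
        intro i j hij
        fin_cases i <;> fin_cases j <;> simp_all [Subtype.ext_iff]
      have := hs_ind.comp _ ginj
      have heq : ((↑) ∘ (![⟨x, hx⟩, ⟨y, hy⟩, ⟨z, hz⟩] : Fin 3 → s)) = ![x, y, z] := by
        funext i; fin_cases i <;> rfl
      rwa [heq] at this
    have hne : det3 x y z ≠ 0 := det3_ne_zero_of_indep x y z hind3
    apply hne
    have := htr p q r
    have hcol : ∀ (u : Fin 2 × Fin 2), colQ M u = Mᵀ u := fun u => rfl
    rw [hcol, hcol, hcol, hp, hq, hr'] at this
    exact this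
  have hker : 2 ≤ Module.finrank ℂ (LinearMap.ker M.mulVecLin) := by
    have h1 := LinearMap.finrank_range_add_finrank_ker M.mulVecLin
    have h2 : Module.finrank ℂ ((Fin 2 × Fin 2) → ℂ) = 4 := by
      simp [Module.finrank_pi]
    rw [h2] at h1
    have : M.rank = Module.finrank ℂ (LinearMap.range M.mulVecLin) := rfl
    omega
  obtain ⟨v, hv⟩ := exists_linearIndependent_of_le_finrank hker
  refine ⟨fun j => (v j : (Fin 2 × Fin 2) → ℂ), ?_, ?_⟩
  · exact hv.map' (LinearMap.ker M.mulVecLin).subtype (Submodule.ker_subtype _)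
  · intro j
    exact (v j).2

/-- Key lemma: if `quad (mvec M) = 0`, the kernel of `M` contains a nonzero product vector. -/
lemma key (M : Matrix (Fin 3) (Fin 2 × Fin 2) ℂ) (hQ : quad (mvec M) = 0) :
    ∃ f g : Fin 2 → ℂ, f ≠ 0 ∧ g ≠ 0 ∧ M.mulVec (fun p => f p.1 * g p.2) = 0 := by
  have main : ∃ h : Fin 2 × Fin 2 → ℂ, h ≠ 0 ∧ quad h = 0 ∧ M.mulVec h = 0 := by
    by_cases hm : mvec M = 0
    · obtain ⟨v, hind, hv⟩ := indep_kernel_of_triples M (triple_dets_zero M hm)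
      exact exists_quad_zero_of_indep M v hind hv
    · exact ⟨mvec M, hm, hQ, mulVec_mvec M⟩
  obtain ⟨h, hne, hq, hker⟩ := main
  obtain ⟨f, g, hf, hg, hfg⟩ := prod_of_quad h hne hq
  refine ⟨f, g, hf, hg, ?_⟩
  have : (fun p : Fin 2 × Fin 2 => f p.1 * g p.2) = h := by
    funext p; exact (hfg p).symm
  rw [this]; exact hker

/-- Three functionals cutting out the kernel of a rank-3 matrix. -/
lemma exists_functionals (ρ : Matrix (Fin 2 × Fin 2 × Fin 2) (Fin 2 × Fin 2 × Fin 2) ℂ)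
    (hrank : ρ.rank = 3) :
    ∃ L : Fin 3 → (Fin 2 × Fin 2 × Fin 2 → ℂ),
      ∀ v, ρ.mulVec v = 0 ↔ ∀ i, L i ⬝ᵥ v = 0 := by
  classical
  set W : Submodule ℂ (Fin 2 × Fin 2 × Fin 2 → ℂ) := Submodule.span ℂ (Set.range ρ) with hW
  have hWrank : Module.finrank ℂ W = 3 := by
    have := Matrix.rank_eq_finrank_span_cols ρᵀ
    rw [Matrix.rank_transpose] at this
    change ρ.rank = Module.finrank ℂ (Submodule.span ℂ (Set.range ρ)) at this
    rw [hW, ← this, hrank]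
  let bW : Module.Basis (Fin 3) ℂ W := Module.finBasisOfFinrankEq ℂ W hWrank
  refine ⟨fun i => (bW i : Fin 2 × Fin 2 × Fin 2 → ℂ), fun v => ?_⟩
  have hspanL : Submodule.span ℂ (Set.range fun i => (bW i : Fin 2 × Fin 2 × Fin 2 → ℂ)) = W := by
    have h1 : (Set.range fun i => (bW i : Fin 2 × Fin 2 × Fin 2 → ℂ))
        = W.subtype '' (Set.range bW) := by
      rw [← Set.range_comp]; rfl
    rw [h1, ← Submodule.map_span, bW.span_eq, Submodule.map_top, Submodule.range_subtype]
  have hWzero : (∀ w ∈ W, w ⬝ᵥ v = 0) ↔ (∀ i, (bW i : Fin 2 × Fin 2 × Fin 2 → ℂ) ⬝ᵥ v = 0) := by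
    constructor
    · intro h i
      exact h _ (bW i).2
    · intro h w hw
      rw [← hspanL] at hw
      refine Submodule.span_induction ?_ ?_ ?_ ?_ hw
      · rintro x ⟨i, rfl⟩; exact h i
      · exact zero_dotProduct v
      · intro a b _ _ ha hb; rw [add_dotProduct, ha, hb, add_zero]
      · intro c a _ ha; rw [smul_dotProduct, ha, smul_zero]
  rw [← hWzero]
  constructor
  · intro h0 w hw
    refine Submodule.span_induction ?_ ?_ ?_ ?_ hw
    · rintro x ⟨i, rfl⟩; exact congrFun h0 i
    · exact zero_dotProduct v
    · intro a b _ _ ha hb; rw [add_dotProduct, ha, hb, add_zero]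
    · intro c a _ ha; rw [smul_dotProduct, ha, smul_zero]
  · intro h
    funext i
    exact h (ρ i) (Submodule.subset_span (Set.mem_range_self i))

/-- Bridge: dotting the functionals against a partially product vector. -/
lemma bridge (L : Fin 3 → (Fin 2 × Fin 2 × Fin 2 → ℂ)) (e : Fin 2 → ℂ)
    (h : Fin 2 × Fin 2 → ℂ) (i : Fin 3) :
    L i ⬝ᵥ (fun q : Fin 2 × Fin 2 × Fin 2 => e q.1 * h (q.2.1, q.2.2)) =
      ((e 0 • Matrix.of (fun i (p : Fin 2 × Fin 2) => L i (0, p.1, p.2))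
        + e 1 • Matrix.of (fun i (p : Fin 2 × Fin 2) => L i (1, p.1, p.2))).mulVec h) i := by
  simp only [dotProduct, mulVec, Fintype.sum_prod_type, Fin.sum_univ_two,
    Matrix.add_apply, Matrix.smul_apply, Matrix.of_apply, smul_eq_mul]
  ring

end PPTAux

open PPTAux

/-- Any three-qubit PPT state of rank 3 has a product vector in its kernel. -/
theorem ppt_rank_three_product_kernel
    (ρ : Matrix (Fin 2 × Fin 2 × Fin 2) (Fin 2 × Fin 2 × Fin 2) ℂ)
    (hpos : ρ.PosSemidef) (hppt : IsPPT ρ) (hrank : ρ.rank = 3) :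
    ∃ e f g : Fin 2 → ℂ, e ≠ 0 ∧ f ≠ 0 ∧ g ≠ 0 ∧
      ρ.mulVec (prodVec e f g) = 0 := by
  classical
  obtain ⟨L, hL⟩ := exists_functionals ρ hrank
  set A : Matrix (Fin 3) (Fin 2 × Fin 2) ℂ :=
    Matrix.of (fun i (p : Fin 2 × Fin 2) => L i (0, p.1, p.2)) with hA
  set B : Matrix (Fin 3) (Fin 2 × Fin 2) ℂ :=
    Matrix.of (fun i (p : Fin 2 × Fin 2) => L i (1, p.1, p.2)) with hB
  -- final step packaged: from a product vector in the kernel of `e0•A + e1•B`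
  have finish : ∀ (e : Fin 2 → ℂ), e ≠ 0 →
      (∀ f g : Fin 2 → ℂ, f ≠ 0 → g ≠ 0 →
        (e 0 • A + e 1 • B).mulVec (fun p : Fin 2 × Fin 2 => f p.1 * g p.2) = 0 →
      ∃ e' f' g' : Fin 2 → ℂ, e' ≠ 0 ∧ f' ≠ 0 ∧ g' ≠ 0 ∧ ρ.mulVec (prodVec e' f' g') = 0) := by
    intro e he f g hf hg hker
    refine ⟨e, f, g, he, hf, hg, ?_⟩
    rw [hL]
    intro i
    have hb := bridge L e (fun p : Fin 2 × Fin 2 => f p.1 * g p.2) i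
    rw [← hA, ← hB] at hb
    have hpv : prodVec e f g =
        (fun q : Fin 2 × Fin 2 × Fin 2 =>
          e q.1 * (fun p : Fin 2 × Fin 2 => f p.1 * g p.2) (q.2.1, q.2.2)) := by
      funext q
      simp only [prodVec]
      ring
    rw [hpv, hb, hker]
    rfl
  by_cases hQB : quad (mvec B) = 0
  · obtain ⟨f, g, hf, hg, hker⟩ := key B hQB
    refine finish ![0, 1] ?_ f g hf hg ?_
    · intro h0; have := congrFun h0 1; simp at this
    · have : ((![0, 1] : Fin 2 → ℂ) 0) • A + ((![0, 1] : Fin 2 → ℂ) 1) • B = B := by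
        simp
      rw [this]; exact hker
  · -- polynomial in x: quad (mvec (A + x B)) has positive degree, hence a root
    set NAB : Matrix (Fin 3) (Fin 2 × Fin 2) (Polynomial ℂ) :=
      Matrix.of (fun i (p : Fin 2 × Fin 2) =>
        Polynomial.C (A i p) + Polynomial.X * Polynomial.C (B i p)) with hNAB
    set P : Polynomial ℂ := quad (mvec NAB) with hP
    have hevalP : ∀ x : ℂ, P.eval x = quad (mvec (A + x • B)) := by
      intro x
      have hmm := map_quad_mvec (Polynomial.evalRingHom x) NAB
      have hmat : (Matrix.of fun i p => (Polynomial.evalRingHom x) (NAB i p)) = A + x • B := by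
        ext i p
        simp [hNAB, Matrix.add_apply, Matrix.smul_apply, smul_eq_mul]
        ring
      rw [hmat] at hmm
      rw [hP, show Polynomial.eval x (quad (mvec NAB))
        = (Polynomial.evalRingHom x) (quad (mvec NAB)) from rfl, hmm]
    set NBA : Matrix (Fin 3) (Fin 2 × Fin 2) (Polynomial ℂ) :=
      Matrix.of (fun i (p : Fin 2 × Fin 2) =>
        Polynomial.X * Polynomial.C (A i p) + Polynomial.C (B i p)) with hNBA
    set P' : Polynomial ℂ := quad (mvec NBA) with hP'
    have hevalP' : ∀ y : ℂ, P'.eval y = quad (mvec (y • A + B)) := by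
      intro y
      have hmm := map_quad_mvec (Polynomial.evalRingHom y) NBA
      have hmat : (Matrix.of fun i p => (Polynomial.evalRingHom y) (NBA i p)) = y • A + B := by
        ext i p
        simp [hNBA, Matrix.add_apply, Matrix.smul_apply, smul_eq_mul]
        ring
      rw [hmat] at hmm
      rw [hP', show Polynomial.eval y (quad (mvec NBA))
        = (Polynomial.evalRingHom y) (quad (mvec NBA)) from rfl, hmm]
    have hdeg : 0 < P.degree := by
      by_contra hd
      push_neg at hd
      have hPc : P = Polynomial.C (P.coeff 0) := Polynomial.eq_C_of_degree_le_zero hd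
      set c : ℂ := P.coeff 0 with hcdef
      have hall : ∀ y : ℂ, y ≠ 0 → P'.eval y = c * y ^ 6 := by
        intro y hy
        have hsplit : y • A + B = y • (A + y⁻¹ • B) := by
          rw [smul_add, smul_smul, mul_inv_cancel₀ hy, one_smul]
        rw [hevalP' y, hsplit, quad_mvec_smul, ← hevalP y⁻¹, hPc]
        simp [mul_comm]
      have hDzero : P' - Polynomial.C c * Polynomial.X ^ 6 = 0 := by
        apply Polynomial.eq_zero_of_infinite_isRoot
        apply Set.Infinite.mono (s := {y : ℂ | y ≠ 0})
        · intro y hy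
          simp only [Set.mem_setOf_eq, Polynomial.IsRoot, Polynomial.eval_sub,
            Polynomial.eval_mul, Polynomial.eval_pow, Polynomial.eval_C, Polynomial.eval_X]
          rw [hall y hy]; ring
        · exact Set.Finite.infinite_compl (Set.finite_singleton 0)
      have hP'0 : P'.eval 0 = 0 := by
        have : P' = Polynomial.C c * Polynomial.X ^ 6 := by
          have := sub_eq_zero.mp hDzero; exact this
        rw [this]; simp
      rw [hevalP' 0] at hP'0
      apply hQB
      rw [show (0 : ℂ) • A + B = B by simp] at hP'0
      exact hP'0
    obtain ⟨x0, hx0⟩ := Complex.exists_root hdeg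
    have hQ0 : quad (mvec (A + x0 • B)) = 0 := by
      rw [← hevalP x0]; exact hx0
    obtain ⟨f, g, hf, hg, hker⟩ := key (A + x0 • B) hQ0
    refine finish ![1, x0] ?_ f g hf hg ?_
    · intro h0; have := congrFun h0 0; simp at this
    · have : ((![1, x0] : Fin 2 → ℂ) 0) • A + ((![1, x0] : Fin 2 → ℂ) 1) • B = A + x0 • B := by
        simp
      rw [this]; exact hker

end
end

section
/- Let B be an N×N complex matrix. If the 2N×2N block matrix with blocks M₁₁ = B†B, M₁₂ = B, M₂₁ = B†, M₂₂ = I_N is positive semidefinite, then B is normal: B B† = B† B. -/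
open Matrix ComplexOrder

namespace Matrix

variable {m n 𝕜 : Type*} [Fintype m] [Fintype n] [DecidableEq n] [RCLike 𝕜]

theorem PosSemidef.sub_mul_conjTranspose_of_fromBlocks_one {A : Matrix m m 𝕜} {B : Matrix m n 𝕜}
    (h : (fromBlocks A B Bᴴ 1).PosSemidef) : (A - B * Bᴴ).PosSemidef := by
  let _ : Invertible (1 : Matrix n n 𝕜) := invertibleOne
  simpa using (PosDef.fromBlocks₂₂ A B PosDef.one).mp h

omit [DecidableEq n] in
theorem mul_conjTranspose_eq_of_posSemidef_sub {B : Matrix n n 𝕜}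
    (h : (Bᴴ * B - B * Bᴴ).PosSemidef) : B * Bᴴ = Bᴴ * B := by
  have htrace : (Bᴴ * B - B * Bᴴ).trace = 0 := by rw [trace_sub, trace_mul_comm, sub_self]
  exact (sub_eq_zero.mp (h.trace_eq_zero_iff.mp htrace)).symm

end Matrix

/-- If the block matrix `[[B†B, B], [B†, 1]]` is positive semidefinite, then `B` is normal. -/
theorem block_psd_normal (N : ℕ) (B : Matrix (Fin N) (Fin N) ℂ)
    (hpos : (Matrix.fromBlocks (Bᴴ * B) B Bᴴ 1).PosSemidef) :
    B * Bᴴ = Bᴴ * B :=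
  mul_conjTranspose_eq_of_posSemidef_sub hpos.sub_mul_conjTranspose_of_fromBlocks_one
end

section
/- Let ρ be a positive semidefinite complex matrix on ℂ²⊗ℂᵐ (indexed by Fin 2 × Fin m) whose partial transpose ρ^{t_A} is also positive semidefinite. If e ∈ ℂ² and φ ∈ ℂᵐ satisfy ρ (e⊗φ) = 0, then ρ^{t_A} (ē⊗φ) = 0, where ē denotes the entrywise complex conjugate of e. -/
/-!
For the product vector `e ⊗ φ`, the quadratic form of `ρ^{t_A}` at `ē ⊗ φ` equals that of `ρ`
at `e ⊗ φ`, which vanishes. A positive semidefinite matrix kills every vector at which its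
quadratic form vanishes, so `ρ^{t_A} (ē ⊗ φ) = 0`.
-/

open Matrix ComplexOrder

noncomputable section

/-- Partial transpose of a `2 × m` bipartite matrix with respect to the first factor. -/
def ptA2 {m : ℕ} (ρ : Matrix (Fin 2 × Fin m) (Fin 2 × Fin m) ℂ) :
    Matrix (Fin 2 × Fin m) (Fin 2 × Fin m) ℂ :=
  fun x y => ρ (y.1, x.2) (x.1, y.2)

namespace Matrix

variable {ι κ R : Type*}

def partialTransposeFst (ρ : Matrix (ι × κ) (ι × κ) R) : Matrix (ι × κ) (ι × κ) R :=
  of fun x y => ρ (y.1, x.2) (x.1, y.2)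

theorem ptA2_eq_partialTransposeFst {m : ℕ} (ρ : Matrix (Fin 2 × Fin m) (Fin 2 × Fin m) ℂ) :
    ptA2 ρ = partialTransposeFst ρ :=
  rfl

theorem star_dotProduct_partialTransposeFst_mulVec_prod [Fintype ι] [Fintype κ]
    [CommSemiring R] [StarRing R] (ρ : Matrix (ι × κ) (ι × κ) R) (e : ι → R) (φ : κ → R) :
    star (fun x : ι × κ => star (e x.1) * φ x.2) ⬝ᵥ
        partialTransposeFst ρ *ᵥ (fun x : ι × κ => star (e x.1) * φ x.2) =
      star (fun x : ι × κ => e x.1 * φ x.2) ⬝ᵥ ρ *ᵥ (fun x : ι × κ => e x.1 * φ x.2) := by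
  simp only [dotProduct, mulVec, partialTransposeFst, of_apply, Pi.star_apply, Finset.mul_sum,
    Fintype.sum_prod_type, star_mul', star_star]
  -- exchange the two `ι`-indices of the left-hand sum
  conv_lhs => enter [2, a]; rw [Finset.sum_comm]
  rw [Finset.sum_comm]
  conv_lhs => enter [2, a']; rw [Finset.sum_comm]
  congr! 4 with a x a' x'
  ring

end Matrix

theorem ppt_kernel_product_conj_general (m : ℕ)
    (ρ : Matrix (Fin 2 × Fin m) (Fin 2 × Fin m) ℂ)
    (hppt : (ptA2 ρ).PosSemidef)
    (e : Fin 2 → ℂ) (φ : Fin m → ℂ)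
    (h : ρ.mulVec (fun x : Fin 2 × Fin m => e x.1 * φ x.2) = 0) :
    (ptA2 ρ).mulVec (fun x : Fin 2 × Fin m => star (e x.1) * φ x.2) = 0 := by
  rw [← hppt.dotProduct_mulVec_zero_iff, ptA2_eq_partialTransposeFst,
    star_dotProduct_partialTransposeFst_mulVec_prod, h, dotProduct_zero]

/-- If a PPT state kills a product vector `e ⊗ φ`, then its partial transpose kills
`ē ⊗ φ`. -/
theorem ppt_kernel_product_conj (m : ℕ)
    (ρ : Matrix (Fin 2 × Fin m) (Fin 2 × Fin m) ℂ)
    (hpos : ρ.PosSemidef) (hppt : (ptA2 ρ).PosSemidef)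
    (e : Fin 2 → ℂ) (φ : Fin m → ℂ)
    (h : ρ.mulVec (fun x : Fin 2 × Fin m => e x.1 * φ x.2) = 0) :
    (ptA2 ρ).mulVec (fun x : Fin 2 × Fin m => star (e x.1) * φ x.2) = 0 :=
  ppt_kernel_product_conj_general m ρ hppt e φ h

end
end

section
/- Let ρ be a positive semidefinite n×n complex matrix and let φ ∈ ℂⁿ be a nonzero vector in the range of ρ. Then Λ := sup { λ ∈ ℝ, λ ≥ 0 : ρ − λ φφ† is positive semidefinite } is finite and strictly positive, the matrix ρ − Λ φφ† is positive semidefinite, and rank(ρ − Λ φφ†) = rank(ρ) − 1. -/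
/-!
Write `φ = ρ ψ` and `c = ψ†ρψ`, which is positive because `ρ ψ ≠ 0`. By Cauchy–Schwarz for the
semi-inner product `⟪x, y⟫ = x†ρy` we have `|φ†x|² = |⟪ψ, x⟫|² ≤ c · x†ρx`, while testing with
`x = ψ` shows that this constant is optimal; hence `ρ - λ φφ†` is positive semidefinite exactly
when `λ c ≤ 1`, and the supremum is `1 / c`. The matrix `ρ - c⁻¹ φφ†` is then Wedderburn's
rank-one reduction of `ρ`: it kills `ψ` and everything `ρ` kills, so its rank drops by at least
one, and by subadditivity of rank it drops by at most one.
-/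

open Matrix ComplexOrder

noncomputable section

section Development

variable {n : Type*} [Fintype n]

namespace Matrix

section Rank

variable {K m : Type*} [Field K]

theorem rank_add_le (A B : Matrix m n K) : (A + B).rank ≤ A.rank + B.rank := by
  rw [rank, mulVecLin_add]
  exact (Submodule.finrank_mono (LinearMap.range_add_le _ _)).trans
    (Submodule.finrank_add_le_finrank_add_finrank _ _)

theorem rank_lt_rank_of_ker_mulVecLin_lt {A B : Matrix m n K}
    (h : LinearMap.ker A.mulVecLin < LinearMap.ker B.mulVecLin) : B.rank < A.rank := by
  have hA := LinearMap.finrank_range_add_finrank_ker A.mulVecLin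
  have hB := LinearMap.finrank_range_add_finrank_ker B.mulVecLin
  have := Submodule.finrank_lt_finrank_of_lt h
  rw [rank, rank]
  omega

/-- Wedderburn's rank-one reduction. -/
theorem rank_sub_inv_smul_vecMulVec_mulVec_vecMul [Fintype m] (A : Matrix m n K) (x : n → K)
    (y : m → K) (hω : y ⬝ᵥ A *ᵥ x ≠ 0) :
    (A - (y ⬝ᵥ A *ᵥ x)⁻¹ • vecMulVec (A *ᵥ x) (y ᵥ* A)).rank = A.rank - 1 := by
  set R := (y ⬝ᵥ A *ᵥ x)⁻¹ • vecMulVec (A *ᵥ x) (y ᵥ* A)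
  have hR (z : n → K) : R *ᵥ z = ((y ⬝ᵥ A *ᵥ x)⁻¹ * (y ⬝ᵥ A *ᵥ z)) • A *ᵥ x := by
    simp only [R, smul_mulVec, vecMulVec_mulVec, op_smul_eq_smul, ← dotProduct_mulVec, smul_smul]
  have hker : LinearMap.ker A.mulVecLin < LinearMap.ker (A - R).mulVecLin := by
    refine lt_of_le_of_ne (fun z hz => ?_) fun heq => ?_
    · rw [LinearMap.mem_ker, mulVecLin_apply] at hz ⊢
      rw [sub_mulVec, hR, hz, dotProduct_zero, mul_zero, zero_smul, sub_zero]
    · have hx : x ∈ LinearMap.ker (A - R).mulVecLin := by simp [hR, hω]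
      rw [← heq, LinearMap.mem_ker, mulVecLin_apply] at hx
      exact hω (by rw [hx, dotProduct_zero])
  have hle : A.rank ≤ (A - R).rank + 1 :=
    calc A.rank = (A - R + R).rank := by rw [sub_add_cancel]
      _ ≤ (A - R).rank + R.rank := rank_add_le _ _
      _ ≤ (A - R).rank + 1 := by
        gcongr
        simp only [R, ← smul_vecMulVec]
        exact rank_vecMulVec_le _ _
  have := rank_lt_rank_of_ker_mulVecLin_lt hker
  omega

end Rank

theorem IsHermitian.star_mulVec_dotProduct {α : Type*} [CommSemiring α] [StarRing α]
    {A : Matrix n n α} (hA : A.IsHermitian) (x y : n → α) :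
    star (A *ᵥ x) ⬝ᵥ y = star x ⬝ᵥ A *ᵥ y := by
  rw [star_mulVec, hA.eq, dotProduct_mulVec]

section RCLike

variable {𝕜 : Type*} [RCLike 𝕜] {A : Matrix n n 𝕜}

theorem IsHermitian.posSemidef_iff_re_dotProduct_mulVec_nonneg (hA : A.IsHermitian) :
    A.PosSemidef ↔ ∀ x, 0 ≤ RCLike.re (star x ⬝ᵥ A *ᵥ x) :=
  ⟨PosSemidef.re_dotProduct_nonneg, fun h => .of_dotProduct_mulVec_nonneg hA fun x =>
    RCLike.nonneg_iff.2 ⟨h x, hA.im_star_dotProduct_mulVec_self x⟩⟩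

theorem PosSemidef.norm_dotProduct_mulVec_sq_le (hA : A.PosSemidef) (x y : n → 𝕜) :
    ‖star x ⬝ᵥ A *ᵥ y‖ ^ 2 ≤
      RCLike.re (star x ⬝ᵥ A *ᵥ x) * RCLike.re (star y ⬝ᵥ A *ᵥ y) := by
  let _ := A.toSeminormedAddCommGroup hA
  let _ := A.toInnerProductSpace hA
  have hinner (u v : n → 𝕜) : inner 𝕜 u v = star u ⬝ᵥ A *ᵥ v := dotProduct_comm _ _
  have hcs := inner_mul_inner_self_le (𝕜 := 𝕜) x y
  rwa [← norm_inner_symm x y, ← sq, hinner, hinner, hinner] at hcs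

theorem PosSemidef.re_dotProduct_mulVec_pos (hA : A.PosSemidef) {x : n → 𝕜} (hx : A *ᵥ x ≠ 0) :
    0 < RCLike.re (star x ⬝ᵥ A *ᵥ x) := by
  refine (hA.re_dotProduct_nonneg x).lt_of_ne fun h => hx ((hA.dotProduct_mulVec_zero_iff x).1 ?_)
  exact RCLike.ext (by simpa using h.symm) (by simpa using hA.1.im_star_dotProduct_mulVec_self x)

end RCLike

end Matrix

theorem outer_mulVec (v x : n → ℂ) : outer v *ᵥ x = (star v ⬝ᵥ x) • v := by
  rw [outer, vecMulVec_mulVec, op_smul_eq_smul]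

theorem isHermitian_outer (v : n → ℂ) : (outer v).IsHermitian :=
  (posSemidef_vecMulVec_self_star v).isHermitian

theorem re_dotProduct_outer_mulVec (v x : n → ℂ) :
    (star x ⬝ᵥ outer v *ᵥ x).re = ‖star v ⬝ᵥ x‖ ^ 2 := by
  rw [outer_mulVec, dotProduct_smul, smul_eq_mul, star_dotProduct x v, Complex.star_def,
    Complex.mul_conj', ← Complex.ofReal_pow, Complex.ofReal_re]

theorem Matrix.PosSemidef.posSemidef_sub_smul_outer_mulVec_iff {ρ : Matrix n n ℂ}
    (hρ : ρ.PosSemidef) (ψ : n → ℂ) (l : ℝ) :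
    (ρ - (l : ℂ) • outer (ρ *ᵥ ψ)).PosSemidef ↔ l * (star ψ ⬝ᵥ ρ *ᵥ ψ).re ≤ 1 := by
  have hherm : (ρ - (l : ℂ) • outer (ρ *ᵥ ψ)).IsHermitian :=
    hρ.1.sub ((isHermitian_outer _).smul (Complex.conj_ofReal l))
  have hform (x : n → ℂ) : (star x ⬝ᵥ (ρ - (l : ℂ) • outer (ρ *ᵥ ψ)) *ᵥ x).re =
      (star x ⬝ᵥ ρ *ᵥ x).re - l * ‖star ψ ⬝ᵥ ρ *ᵥ x‖ ^ 2 := by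
    rw [sub_mulVec, dotProduct_sub, smul_mulVec, dotProduct_smul, Complex.sub_re, smul_eq_mul,
      Complex.re_ofReal_mul, re_dotProduct_outer_mulVec, hρ.1.star_mulVec_dotProduct]
  rw [hherm.posSemidef_iff_re_dotProduct_mulVec_nonneg]
  simp only [RCLike.re_to_complex, hform, sub_nonneg]
  set c := (star ψ ⬝ᵥ ρ *ᵥ ψ).re
  have hc : 0 ≤ c := hρ.re_dotProduct_nonneg ψ
  constructor
  · intro h
    rcases le_or_gt l 0 with hl | hl
    · nlinarith
    by_contra! hlc
    have hsq : c ^ 2 ≤ ‖star ψ ⬝ᵥ ρ *ᵥ ψ‖ ^ 2 := pow_le_pow_left₀ hc (Complex.re_le_norm _) 2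
    nlinarith [h ψ, mul_le_mul_of_nonneg_left hsq hl.le]
  · intro hlc x
    have hcs := hρ.norm_dotProduct_mulVec_sq_le ψ x
    have hq : 0 ≤ (star x ⬝ᵥ ρ *ᵥ x).re := hρ.re_dotProduct_nonneg x
    simp only [RCLike.re_to_complex] at hcs
    rcases le_or_gt l 0 with hl | hl
    · nlinarith [sq_nonneg ‖star ψ ⬝ᵥ ρ *ᵥ x‖]
    · nlinarith

theorem Matrix.IsHermitian.rank_sub_smul_outer_mulVec {ρ : Matrix n n ℂ} (hρ : ρ.IsHermitian)
    {ψ : n → ℂ} (hψ : (star ψ ⬝ᵥ ρ *ᵥ ψ).re ≠ 0) :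
    (ρ - (((star ψ ⬝ᵥ ρ *ᵥ ψ).re⁻¹ : ℝ) : ℂ) • outer (ρ *ᵥ ψ)).rank = ρ.rank - 1 := by
  have hreal : ((star ψ ⬝ᵥ ρ *ᵥ ψ).re : ℂ) = star ψ ⬝ᵥ ρ *ᵥ ψ :=
    Complex.ext rfl (by simpa using (hρ.im_star_dotProduct_mulVec_self ψ).symm)
  have houter : outer (ρ *ᵥ ψ) = vecMulVec (ρ *ᵥ ψ) (star ψ ᵥ* ρ) := by
    rw [outer, star_mulVec, hρ.eq]
  rw [Complex.ofReal_inv, hreal, houter]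
  exact rank_sub_inv_smul_vecMulVec_mulVec_vecMul ρ ψ (star ψ)
    (hreal ▸ Complex.ofReal_ne_zero.2 hψ)

end Development

/-- Projector-subtraction lemma: for a positive semidefinite `ρ` and a nonzero vector `φ`
in its range, the maximal `λ ≥ 0` with `ρ - λ φφ†` positive semidefinite is finite and
strictly positive, the subtracted matrix is positive semidefinite, and its rank is
`rank ρ - 1`. -/
theorem projector_subtraction (n : ℕ) (ρ : Matrix (Fin n) (Fin n) ℂ)
    (hpos : ρ.PosSemidef) (φ : Fin n → ℂ) (hφ : φ ≠ 0)
    (hrange : ∃ ψ, ρ.mulVec ψ = φ) :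
    BddAbove {l : ℝ | 0 ≤ l ∧ (ρ - (l : ℂ) • outer φ).PosSemidef} ∧
    0 < sSup {l : ℝ | 0 ≤ l ∧ (ρ - (l : ℂ) • outer φ).PosSemidef} ∧
    (ρ - ((sSup {l : ℝ | 0 ≤ l ∧ (ρ - (l : ℂ) • outer φ).PosSemidef} : ℝ) : ℂ) •
        outer φ).PosSemidef ∧
    (ρ - ((sSup {l : ℝ | 0 ≤ l ∧ (ρ - (l : ℂ) • outer φ).PosSemidef} : ℝ) : ℂ) •
        outer φ).rank = ρ.rank - 1 := by
  obtain ⟨ψ, rfl⟩ := hrange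
  have hc : 0 < (star ψ ⬝ᵥ ρ *ᵥ ψ).re := hpos.re_dotProduct_mulVec_pos hφ
  have hS : {l : ℝ | 0 ≤ l ∧ (ρ - (l : ℂ) • outer (ρ *ᵥ ψ)).PosSemidef} =
      Set.Icc 0 (star ψ ⬝ᵥ ρ *ᵥ ψ).re⁻¹ := by
    ext l
    rw [Set.mem_ofPred_eq, Set.mem_Icc, hpos.posSemidef_sub_smul_outer_mulVec_iff,
      ← le_div_iff₀ hc, one_div]
  rw [hS, csSup_Icc (inv_nonneg.2 hc.le)]
  exact ⟨bddAbove_Icc, inv_pos.2 hc,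
    (hpos.posSemidef_sub_smul_outer_mulVec_iff ψ _).2 (inv_mul_cancel₀ hc.ne').le,
    hpos.1.rank_sub_smul_outer_mulVec hc.ne'⟩

end
end

section
/- Let ρ be a PPT state on ℂ²⊗ℂ²⊗ℂᴺ such that dim ker(ρ) + dim ker(ρ^{t_A}) + dim ker(ρ^{t_B}) + dim ker(ρ^{t_{AB}}) ≤ N − 1 (equivalently, rank(ρ) + rank(ρ^{t_A}) + rank(ρ^{t_B}) + rank(ρ^{t_{AB}}) ≥ 15N + 1). Then for every pair of nonzero vectors e, f ∈ ℂ² there exists a nonzero vector g ∈ ℂᴺ such that e⊗f⊗g ∈ Range(ρ), ē⊗f⊗g ∈ Range(ρ^{t_A}), e⊗f̄⊗g ∈ Range(ρ^{t_B}) and ē⊗f̄⊗g ∈ Range(ρ^{t_{AB}}), where ·̄ denotes entrywise complex conjugation. -/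
/-! For any square matrix `σ`, the range of `σ` has codimension `dim ker σ`. The vectors `g` with
`e ⊗ f ⊗ g ∈ range σ` are the preimage of that range under the linear map `g ↦ e ⊗ f ⊗ g`, hence
form a subspace of `ℂᴺ` of codimension at most `dim ker σ`. Four subspaces whose codimensions add
up to less than `N` meet in a nonzero vector `g`: it is a nonzero element of the kernel of
`g ↦ (e' ⊗ f' ⊗ g mod range σ)` into a product of quotients of total dimension `< N`. -/

open Matrix BigOperators ComplexOrder

noncomputable section

/-- The dimension of the kernel of a matrix. -/
def kerDim {N : ℕ} (ρ : Matrix (Fin 2 × Fin 2 × Fin N) (Fin 2 × Fin 2 × Fin N) ℂ) : ℕ :=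
  Module.finrank ℂ (LinearMap.ker ρ.mulVecLin)

theorem exists_ne_zero_forall_mem_of_sum_finrank_quotient_lt {K V W J : Type*} [Field K]
    [AddCommGroup V] [Module K V] [FiniteDimensional K V]
    [AddCommGroup W] [Module K W] [FiniteDimensional K W] [Fintype J]
    (R : J → Submodule K V) (T : J → W →ₗ[K] V)
    (h : ∑ j, Module.finrank K (V ⧸ R j) < Module.finrank K W) :
    ∃ w ≠ 0, ∀ j, T j w ∈ R j := by
  let Φ : W →ₗ[K] ∀ j, V ⧸ R j := LinearMap.pi fun j => (R j).mkQ ∘ₗ T j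
  have hΦ : LinearMap.ker Φ ≠ ⊥ :=
    LinearMap.ker_ne_bot_of_finrank_lt (by rwa [Module.finrank_pi_fintype])
  obtain ⟨w, hw, hw0⟩ := Submodule.exists_mem_ne_zero_of_ne_bot hΦ
  refine ⟨w, hw0, fun j => ?_⟩
  rw [← Submodule.ker_mkQ (R j)]
  exact congr_fun hw j

theorem LinearMap.finrank_quotient_range_eq_finrank_ker {K V : Type*} [Field K]
    [AddCommGroup V] [Module K V] [FiniteDimensional K V] (f : V →ₗ[K] V) :
    Module.finrank K (V ⧸ LinearMap.range f) = Module.finrank K (LinearMap.ker f) := by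
  have := (LinearMap.range f).finrank_quotient_add_finrank
  have := f.finrank_range_add_finrank_ker
  omega

def prodVecLinear {N : ℕ} (e f : Fin 2 → ℂ) : (Fin N → ℂ) →ₗ[ℂ] (Fin 2 × Fin 2 × Fin N → ℂ) :=
  LinearMap.pi fun x => (e x.1 * f x.2.1) • LinearMap.proj x.2.2

theorem product_vectors_in_ranges_general (N : ℕ)
    (ρ : Matrix (Fin 2 × Fin 2 × Fin N) (Fin 2 × Fin 2 × Fin N) ℂ)
    (hker : kerDim ρ + kerDim (ptA ρ) + kerDim (ptB ρ) + kerDim (ptAB ρ) + 1 ≤ N) :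
    ∀ e f : Fin 2 → ℂ, e ≠ 0 → f ≠ 0 →
      ∃ g : Fin N → ℂ, g ≠ 0 ∧
        (∃ w, ρ.mulVec w = prodVec e f g) ∧
        (∃ w, (ptA ρ).mulVec w = prodVec (star e) f g) ∧
        (∃ w, (ptB ρ).mulVec w = prodVec e (star f) g) ∧
        (∃ w, (ptAB ρ).mulVec w = prodVec (star e) (star f) g) := by
  intro e f _ _
  let σ : Fin 4 → Matrix (Fin 2 × Fin 2 × Fin N) (Fin 2 × Fin 2 × Fin N) ℂ :=
    ![ρ, ptA ρ, ptB ρ, ptAB ρ]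
  let T : Fin 4 → (Fin N → ℂ) →ₗ[ℂ] (Fin 2 × Fin 2 × Fin N → ℂ) :=
    ![prodVecLinear e f, prodVecLinear (star e) f, prodVecLinear e (star f),
      prodVecLinear (star e) (star f)]
  obtain ⟨g, hg0, hg⟩ := exists_ne_zero_forall_mem_of_sum_finrank_quotient_lt
    (fun j => LinearMap.range (σ j).mulVecLin) T (by
      simp only [LinearMap.finrank_quotient_range_eq_finrank_ker, Fin.sum_univ_four,
        Module.finrank_fin_fun]
      exact hker)
  exact ⟨g, hg0, hg 0, hg 1, hg 2, hg 3⟩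

/-- If the kernels of a PPT state and of its partial transposes together have dimension at
most `N - 1`, then for every pair of nonzero `e, f ∈ ℂ²` there is a nonzero `g ∈ ℂᴺ` such
that `e⊗f⊗g`, `ē⊗f⊗g`, `e⊗f̄⊗g`, `ē⊗f̄⊗g` lie in the respective ranges. -/
theorem product_vectors_in_ranges (N : ℕ)
    (ρ : Matrix (Fin 2 × Fin 2 × Fin N) (Fin 2 × Fin 2 × Fin N) ℂ)
    (hpos : ρ.PosSemidef) (hppt : IsPPT ρ)
    (hker : kerDim ρ + kerDim (ptA ρ) + kerDim (ptB ρ) + kerDim (ptAB ρ) + 1 ≤ N) :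
    ∀ e f : Fin 2 → ℂ, e ≠ 0 → f ≠ 0 →
      ∃ g : Fin N → ℂ, g ≠ 0 ∧
        (∃ w, ρ.mulVec w = prodVec e f g) ∧
        (∃ w, (ptA ρ).mulVec w = prodVec (star e) f g) ∧
        (∃ w, (ptB ρ).mulVec w = prodVec e (star f) g) ∧
        (∃ w, (ptAB ρ).mulVec w = prodVec (star e) (star f) g) :=
  product_vectors_in_ranges_general N ρ hker

end
end

section
/- Let δ be a nonzero PPT state on ℂ²⊗ℂ²⊗ℂᴺ which is an edge state, and let P, Q, R, S be positive semidefinite matrices on ℂ²⊗ℂ²⊗ℂᴺ with Range(P) = ker(δ), Range(Q) = ker(δ^{t_A}), Range(R) = ker(δ^{t_B}) and Range(S) = ker(δ^{t_{AB}}). Then ε := inf { ⟨e⊗f⊗g, (P + Q^{t_A} + R^{t_B} + S^{t_{AB}}) (e⊗f⊗g)⟩ : e, f ∈ ℂ², g ∈ ℂᴺ unit vectors } is strictly positive. -/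
open Matrix BigOperators ComplexOrder

noncomputable section

/-- `v` is in the range of the matrix `M`. -/
def InRange {N : ℕ} (M : Matrix (Fin 2 × Fin 2 × Fin N) (Fin 2 × Fin 2 × Fin N) ℂ)
    (v : Fin 2 × Fin 2 × Fin N → ℂ) : Prop :=
  ∃ w, M.mulVec w = v

/-- A PPT state `δ` is an edge state: no nonzero product vector `e⊗f⊗g` lies in the range
of `δ` with its partial conjugates in the ranges of the partial transposes. -/
def IsEdgeState {N : ℕ} (δ : Matrix (Fin 2 × Fin 2 × Fin N) (Fin 2 × Fin 2 × Fin N) ℂ) :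
    Prop :=
  ¬ ∃ (e f : Fin 2 → ℂ) (g : Fin N → ℂ), e ≠ 0 ∧ f ≠ 0 ∧ g ≠ 0 ∧
    InRange δ (prodVec e f g) ∧
    InRange (ptA δ) (prodVec (star e) f g) ∧
    InRange (ptB δ) (prodVec e (star f) g) ∧
    InRange (ptAB δ) (prodVec (star e) (star f) g)

/-- The set of values `⟨e⊗f⊗g, (P + Q^{t_A} + R^{t_B} + S^{t_{AB}}) e⊗f⊗g⟩` over unit
vectors `e`, `f`, `g`. -/
def epsSet {N : ℕ} (P Q R S : Matrix (Fin 2 × Fin 2 × Fin N) (Fin 2 × Fin 2 × Fin N) ℂ) :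
    Set ℝ :=
  {r : ℝ | ∃ (e f : Fin 2 → ℂ) (g : Fin N → ℂ),
    star e ⬝ᵥ e = 1 ∧ star f ⬝ᵥ f = 1 ∧ star g ⬝ᵥ g = 1 ∧
    (r : ℂ) = star (prodVec e f g) ⬝ᵥ
      (P + ptA Q + ptB R + ptAB S).mulVec (prodVec e f g)}

/-!
At a product vector `e⊗f⊗g`, the quadratic form of `P + Q^{t_A} + R^{t_B} + S^{t_{AB}}` is the
sum of the quadratic forms of `P, Q, R, S` at `e⊗f⊗g, ē⊗f⊗g, e⊗f̄⊗g, ē⊗f̄⊗g`, each nonnegative.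
If it vanished, these four vectors would lie in the kernels of `P, Q, R, S`. For Hermitian
matrices, `Range B = ker A` forces `ker B = Range A`, so they would lie in the ranges of `δ` and of
its partial transposes, which the edge property forbids. Hence the form is positive at every
triple of unit vectors; these triples form a compact set, so the infimum is attained and positive.
-/

theorem Matrix.IsHermitian.ker_mulVecLin_eq_range_of_range_eq_ker {𝕜 n : Type*} [RCLike 𝕜]
    [Fintype n] {A B : Matrix n n 𝕜} (hA : A.IsHermitian) (hB : B.IsHermitian)
    (h : LinearMap.range B.mulVecLin = LinearMap.ker A.mulVecLin) :
    LinearMap.ker B.mulVecLin = LinearMap.range A.mulVecLin := by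
  classical
  have hAB : A * B = 0 := by
    have hcomp : A.mulVecLin ∘ₗ B.mulVecLin = 0 := LinearMap.range_le_ker_iff.mp h.le
    rw [← Matrix.mulVecLin_mul] at hcomp
    exact Matrix.toLin'.injective (by simpa [Matrix.toLin'_apply'] using hcomp)
  have hBA : B * A = 0 := by
    simpa [hA.eq, hB.eq] using congrArg Matrix.conjTranspose hAB
  have hle : LinearMap.range A.mulVecLin ≤ LinearMap.ker B.mulVecLin :=
    LinearMap.range_le_ker_iff.mpr (by rw [← Matrix.mulVecLin_mul, hBA, Matrix.mulVecLin_zero])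
  have hA_dim := LinearMap.finrank_range_add_finrank_ker A.mulVecLin
  have hB_dim := LinearMap.finrank_range_add_finrank_ker B.mulVecLin
  rw [h] at hB_dim
  exact (Submodule.eq_of_le_of_finrank_eq hle (by omega)).symm

theorem isCompact_setOf_star_dotProduct_self_eq_one {𝕜 ι : Type*} [RCLike 𝕜] [Fintype ι] :
    IsCompact {v : ι → 𝕜 | star v ⬝ᵥ v = 1} := by
  have hsphere : {v : ι → 𝕜 | star v ⬝ᵥ v = 1}
      = WithLp.ofLp '' Metric.sphere (0 : EuclideanSpace 𝕜 ι) 1 := by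
    ext v
    have hnorm : star v ⬝ᵥ v = ((‖WithLp.toLp 2 v‖ ^ 2 : ℝ) : 𝕜) := by
      rw [RCLike.ofReal_pow, ← inner_self_eq_norm_sq_to_K, EuclideanSpace.inner_eq_star_dotProduct,
        dotProduct_comm]
    rw [Set.mem_ofPred_eq, hnorm, ← RCLike.ofReal_one, RCLike.ofReal_inj,
      pow_eq_one_iff_of_nonneg (norm_nonneg _) two_ne_zero]
    exact ⟨fun hv => ⟨_, by simpa using hv, rfl⟩, by rintro ⟨x, hx, rfl⟩; simpa using hx⟩
  rw [hsphere]
  exact (isCompact_sphere 0 1).image (PiLp.continuous_ofLp 2 _)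

theorem ne_zero_of_star_dotProduct_self_eq_one {R ι : Type*} [NonAssocSemiring R] [StarRing R]
    [Nontrivial R] [Fintype ι] {v : ι → R} (hv : star v ⬝ᵥ v = 1) : v ≠ 0 := by
  rintro rfl
  simp at hv

theorem dotProduct_mulVec_eq_sum_prod {R n : Type*} [CommSemiring R] [Fintype n]
    (v w : n → R) (M : Matrix n n R) :
    v ⬝ᵥ M *ᵥ w = ∑ p : n × n, v p.1 * M p.1 p.2 * w p.2 := by
  simp only [dotProduct, mulVec, Finset.mul_sum, Fintype.sum_prod_type, mul_assoc]

section PartialTranspose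

variable {N : ℕ} (Q : Matrix (Fin 2 × Fin 2 × Fin N) (Fin 2 × Fin 2 × Fin N) ℂ)
  (e f : Fin 2 → ℂ) (g : Fin N → ℂ)

theorem dotProduct_ptA_mulVec_prodVec :
    star (prodVec e f g) ⬝ᵥ ptA Q *ᵥ prodVec e f g
      = star (prodVec (star e) f g) ⬝ᵥ Q *ᵥ prodVec (star e) f g := by
  have hσ : Function.Involutive fun p : (Fin 2 × Fin 2 × Fin N) × (Fin 2 × Fin 2 × Fin N) =>
      ((p.2.1, p.1.2), (p.1.1, p.2.2)) := fun _ => rfl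
  rw [dotProduct_mulVec_eq_sum_prod, dotProduct_mulVec_eq_sum_prod]
  refine Fintype.sum_equiv (hσ.toPerm _) _ _ fun p => ?_
  simp only [Function.Involutive.coe_toPerm, ptA, prodVec, Pi.star_apply, star_mul', star_star]
  ring

theorem dotProduct_ptB_mulVec_prodVec :
    star (prodVec e f g) ⬝ᵥ ptB Q *ᵥ prodVec e f g
      = star (prodVec e (star f) g) ⬝ᵥ Q *ᵥ prodVec e (star f) g := by
  have hσ : Function.Involutive fun p : (Fin 2 × Fin 2 × Fin N) × (Fin 2 × Fin 2 × Fin N) =>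
      ((p.1.1, p.2.2.1, p.1.2.2), (p.2.1, p.1.2.1, p.2.2.2)) := fun _ => rfl
  rw [dotProduct_mulVec_eq_sum_prod, dotProduct_mulVec_eq_sum_prod]
  refine Fintype.sum_equiv (hσ.toPerm _) _ _ fun p => ?_
  simp only [Function.Involutive.coe_toPerm, ptB, prodVec, Pi.star_apply, star_mul', star_star]
  ring

theorem dotProduct_ptAB_mulVec_prodVec :
    star (prodVec e f g) ⬝ᵥ ptAB Q *ᵥ prodVec e f g
      = star (prodVec (star e) (star f) g) ⬝ᵥ Q *ᵥ prodVec (star e) (star f) g := by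
  rw [ptAB, dotProduct_ptB_mulVec_prodVec, dotProduct_ptA_mulVec_prodVec]

end PartialTranspose

theorem inRange_of_dotProduct_mulVec_eq_zero {N : ℕ}
    {A T : Matrix (Fin 2 × Fin 2 × Fin N) (Fin 2 × Fin 2 × Fin N) ℂ} (hA : A.IsHermitian)
    (hT : T.PosSemidef) (h : LinearMap.range T.mulVecLin = LinearMap.ker A.mulVecLin)
    {v : Fin 2 × Fin 2 × Fin N → ℂ} (hv : star v ⬝ᵥ T *ᵥ v = 0) : InRange A v := by
  have hker : v ∈ LinearMap.ker T.mulVecLin := (hT.dotProduct_mulVec_zero_iff v).mp hv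
  rwa [hA.ker_mulVecLin_eq_range_of_range_eq_ker hT.isHermitian h] at hker

theorem IsEdgeState.dotProduct_mulVec_prodVec_pos {N : ℕ}
    {δ P Q R S : Matrix (Fin 2 × Fin 2 × Fin N) (Fin 2 × Fin 2 × Fin N) ℂ}
    (hedge : IsEdgeState δ) (hδ : δ.IsHermitian) (hppt : IsPPT δ)
    (hP : P.PosSemidef) (hQ : Q.PosSemidef) (hR : R.PosSemidef) (hS : S.PosSemidef)
    (hPr : LinearMap.range P.mulVecLin = LinearMap.ker δ.mulVecLin)
    (hQr : LinearMap.range Q.mulVecLin = LinearMap.ker (ptA δ).mulVecLin)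
    (hRr : LinearMap.range R.mulVecLin = LinearMap.ker (ptB δ).mulVecLin)
    (hSr : LinearMap.range S.mulVecLin = LinearMap.ker (ptAB δ).mulVecLin)
    {e f : Fin 2 → ℂ} {g : Fin N → ℂ} (he : e ≠ 0) (hf : f ≠ 0) (hg : g ≠ 0) :
    0 < star (prodVec e f g) ⬝ᵥ (P + ptA Q + ptB R + ptAB S) *ᵥ prodVec e f g := by
  simp only [add_mulVec, dotProduct_add, dotProduct_ptA_mulVec_prodVec,
    dotProduct_ptB_mulVec_prodVec, dotProduct_ptAB_mulVec_prodVec]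
  have hp := hP.dotProduct_mulVec_nonneg (prodVec e f g)
  have hq := hQ.dotProduct_mulVec_nonneg (prodVec (star e) f g)
  have hr := hR.dotProduct_mulVec_nonneg (prodVec e (star f) g)
  have hs := hS.dotProduct_mulVec_nonneg (prodVec (star e) (star f) g)
  refine lt_of_le_of_ne (add_nonneg (add_nonneg (add_nonneg hp hq) hr) hs) fun hzero => ?_
  rw [eq_comm, add_eq_zero_iff_of_nonneg (add_nonneg (add_nonneg hp hq) hr) hs,
    add_eq_zero_iff_of_nonneg (add_nonneg hp hq) hr, add_eq_zero_iff_of_nonneg hp hq] at hzero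
  obtain ⟨⟨⟨hp0, hq0⟩, hr0⟩, hs0⟩ := hzero
  exact hedge ⟨e, f, g, he, hf, hg,
    inRange_of_dotProduct_mulVec_eq_zero hδ hP hPr hp0,
    inRange_of_dotProduct_mulVec_eq_zero hppt.1.isHermitian hQ hQr hq0,
    inRange_of_dotProduct_mulVec_eq_zero hppt.2.1.isHermitian hR hRr hr0,
    inRange_of_dotProduct_mulVec_eq_zero hppt.2.2.isHermitian hS hSr hs0⟩

theorem isCompact_epsSet {N : ℕ}
    (P Q R S : Matrix (Fin 2 × Fin 2 × Fin N) (Fin 2 × Fin 2 × Fin N) ℂ) :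
    IsCompact (epsSet P Q R S) := by
  let q (p : (Fin 2 → ℂ) × (Fin 2 → ℂ) × (Fin N → ℂ)) : ℂ :=
    star (prodVec p.1 p.2.1 p.2.2) ⬝ᵥ (P + ptA Q + ptB R + ptAB S) *ᵥ prodVec p.1 p.2.1 p.2.2
  let K := {e : Fin 2 → ℂ | star e ⬝ᵥ e = 1} ×ˢ {f : Fin 2 → ℂ | star f ⬝ᵥ f = 1} ×ˢ
    {g : Fin N → ℂ | star g ⬝ᵥ g = 1}
  have hq : Continuous q := by
    simp only [q, dotProduct, mulVec, prodVec, Pi.star_apply]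
    fun_prop
  have hK : IsCompact K := isCompact_setOf_star_dotProduct_self_eq_one.prod
    (isCompact_setOf_star_dotProduct_self_eq_one.prod isCompact_setOf_star_dotProduct_self_eq_one)
  have heps : epsSet P Q R S = ((↑) : ℝ → ℂ) ⁻¹' (q '' K) := by
    ext r
    constructor
    · rintro ⟨e, f, g, he, hf, hg, hr⟩
      exact ⟨(e, f, g), ⟨he, hf, hg⟩, hr.symm⟩
    · rintro ⟨⟨e, f, g⟩, ⟨he, hf, hg⟩, hr⟩
      exact ⟨e, f, g, he, hf, hg, hr.symm⟩
  rw [heps]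
  exact Complex.isometry_ofReal.isClosedEmbedding.isCompact_preimage (hK.image hq)

/-- For an edge state `δ` and positive operators `P, Q, R, S` whose ranges are the kernels
of `δ` and of its partial transposes, the quantity
`ε = inf ⟨e⊗f⊗g|P + Q^{t_A} + R^{t_B} + S^{t_{AB}}|e⊗f⊗g⟩` is strictly positive. -/
theorem edge_state_eps_pos (N : ℕ)
    (δ P Q R S : Matrix (Fin 2 × Fin 2 × Fin N) (Fin 2 × Fin 2 × Fin N) ℂ)
    (hδpos : δ.PosSemidef) (hδppt : IsPPT δ) (hδne : δ ≠ 0) (hedge : IsEdgeState δ)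
    (hP : P.PosSemidef) (hQ : Q.PosSemidef) (hR : R.PosSemidef) (hS : S.PosSemidef)
    (hPr : LinearMap.range P.mulVecLin = LinearMap.ker δ.mulVecLin)
    (hQr : LinearMap.range Q.mulVecLin = LinearMap.ker (ptA δ).mulVecLin)
    (hRr : LinearMap.range R.mulVecLin = LinearMap.ker (ptB δ).mulVecLin)
    (hSr : LinearMap.range S.mulVecLin = LinearMap.ker (ptAB δ).mulVecLin) :
    0 < sInf (epsSet P Q R S) := by
  have hpos {e f : Fin 2 → ℂ} {g : Fin N → ℂ} (he : star e ⬝ᵥ e = 1)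
      (hf : star f ⬝ᵥ f = 1) (hg : star g ⬝ᵥ g = 1) :
      0 < star (prodVec e f g) ⬝ᵥ (P + ptA Q + ptB R + ptAB S) *ᵥ prodVec e f g :=
    hedge.dotProduct_mulVec_prodVec_pos hδpos.isHermitian hδppt hP hQ hR hS hPr hQr hRr hSr
      (ne_zero_of_star_dotProduct_self_eq_one he) (ne_zero_of_star_dotProduct_self_eq_one hf)
      (ne_zero_of_star_dotProduct_self_eq_one hg)
  have hN : NeZero N := ⟨by rintro rfl; exact hδne (Matrix.ext fun x => x.2.2.elim0)⟩
  have hne : (epsSet P Q R S).Nonempty := by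
    have hsingle {ι : Type} [Fintype ι] [DecidableEq ι] (i : ι) :
        star (Pi.single i 1 : ι → ℂ) ⬝ᵥ Pi.single i 1 = 1 := by simp
    have hq := (hpos (hsingle 0) (hsingle 0) (hsingle 0)).le
    exact ⟨_, _, _, _, hsingle 0, hsingle 0, hsingle 0,
      (Complex.eq_re_of_ofReal_le (r := 0) (by simpa using hq)).symm⟩
  obtain ⟨e, f, g, he, hf, hg, hr⟩ := (isCompact_epsSet P Q R S).sInf_mem hne
  exact Complex.zero_lt_real.mp (hr ▸ hpos he hf hg)

end
end
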